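/- arXiv:2112.15378 — 3 statements merged into one kernel-verified Lean document; each statement's English description precedes it below -/
import Mathlib

section
/- Let δ: ℤ → {0,1} be defined by δ(0)=1 and δ(n)=0 for n≠0, and write e(x)=e^{2πix}. Let Q ≥ 1 be a real number, p a prime, and k, λ integers with 1 ≤ λ ≤ k. Suppose g: ℤ_{≥1} × ℝ → ℂ is such that x ↦ g(q,x) is absolutely integrable for each q and such that for every n ∈ ℤ one has δ(n) = (1/Q) ∑_{1≤q≤Q} (1/q) ∑*_{a mod q} e(na/q) ∫_ℝ g(q,x) e(nx/(qQ)) dx, where ∑* restricts a to residues coprime to q. Then for every n ∈ ℤ: δ(n) = ∑_{r=0}^{λ} (1/Q) ∑_{q≤Q, gcd(q,p)=1} (1/(q p^λ)) ∑*_{a mod q p^{λ−r}} e(an/(q p^{λ−r})) ∫_ℝ g(q,x) e(nx/(Q q p^λ)) dx + ∑_{s=1}^{⌊log Q/log p⌋} (1/Q) ∑_{q≤Q/p^s, gcd(q,p)=1} (1/(q p^{λ+s})) ∑*_{a mod q p^{λ+s}} e(an/(q p^{λ+s})) ∫_ℝ g(p^s q, x) e(nx/(Q q p^{λ+s})) dx.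 -/
/-!
STATEMENT 0: the p-power–adapted decomposition of the
Duke–Friedlander–Iwaniec delta method.
-/

open scoped BigOperators
open MeasureTheory

/-- `e(x) = e^{2πix}`. -/
noncomputable def e (x : ℝ) : ℂ := Complex.exp (2 * Real.pi * Complex.I * x)

/-- `δ(0) = 1`, `δ(n) = 0` for `n ≠ 0`. -/
noncomputable def deltaZ (n : ℤ) : ℂ := if n = 0 then 1 else 0

lemma e_add (x y : ℝ) : e (x + y) = e x * e y := by
  simp [e, mul_add, Complex.exp_add]

lemma e_int (k : ℤ) : e k = 1 := by
  unfold e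
  rw [mul_comm, show ((k:ℝ):ℂ) = (k:ℂ) by push_cast; ring]
  exact Complex.exp_int_mul_two_pi_mul_I k

lemma e_nat_mul (w : ℕ) (x : ℝ) : e (w * x) = e x ^ w := by
  unfold e
  rw [← Complex.exp_nat_mul]
  push_cast
  ring_nf

lemma sum_e_full_zero (M : ℕ) (n : ℤ) (h : ¬ ((M:ℤ) ∣ n)) :
    ∑ w ∈ Finset.range M, e ((w : ℝ) * (n : ℝ) / (M : ℝ)) = 0 := by
  rcases Nat.eq_zero_or_pos M with h0 | h0
  · subst h0; simp
  have hM : (M : ℝ) ≠ 0 := by positivity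
  have hterm : ∀ w : ℕ, e ((w : ℝ) * (n : ℝ) / (M : ℝ)) = e ((n:ℝ)/(M:ℝ)) ^ w := by
    intro w; rw [← e_nat_mul]; ring_nf
  set ζ : ℂ := e ((n:ℝ)/(M:ℝ)) with hζ
  have hζM : ζ ^ M = 1 := by
    rw [← e_nat_mul]
    have : (M : ℝ) * ((n:ℝ)/(M:ℝ)) = ((n : ℤ) : ℝ) := by field_simp
    rw [this, e_int]
  have hζ1 : ζ ≠ 1 := by
    intro hone
    apply h
    rw [hζ] at hone
    unfold e at hone
    rw [Complex.exp_eq_one_iff] at hone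
    obtain ⟨t, ht⟩ := hone
    have h2 : (2 * Real.pi * Complex.I) ≠ 0 := by
      simpa [mul_comm] using Complex.two_pi_I_ne_zero
    have : ((((n:ℝ)/(M:ℝ)) : ℝ) : ℂ) = (t : ℂ) := by
      apply mul_left_cancel₀ h2
      rw [ht]; ring
    have hre : (n:ℝ)/(M:ℝ) = (t : ℝ) := by exact_mod_cast this
    have : (n : ℝ) = (t : ℝ) * (M : ℝ) := by field_simp at hre ⊢; linarith [hre]
    exact ⟨t, by exact_mod_cast (by rw [this]; ring : (n:ℝ) = ((M:ℝ) * (t:ℝ)))⟩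
  calc ∑ w ∈ Finset.range M, e ((w : ℝ) * (n : ℝ) / (M : ℝ))
      = ∑ w ∈ Finset.range M, ζ ^ w := by
        exact Finset.sum_congr rfl fun w _ => hterm w
    _ = (ζ ^ M - 1) / (ζ - 1) := geom_sum_eq hζ1 M
    _ = 0 := by rw [hζM]; simp

lemma sum_e_full_dvd (M : ℕ) (n : ℤ) (h : (M:ℤ) ∣ n) :
    ∑ w ∈ Finset.range M, e ((w : ℝ) * (n : ℝ) / (M : ℝ)) = (M : ℂ) := by
  rcases Nat.eq_zero_or_pos M with h0 | h0
  · subst h0; simp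
  obtain ⟨t, rfl⟩ := h
  have hM : (M : ℝ) ≠ 0 := by positivity
  have hterm : ∀ w : ℕ, e ((w : ℝ) * ((((M:ℤ) * t : ℤ)) : ℝ) / (M : ℝ)) = 1 := by
    intro w
    have : (w : ℝ) * ((((M:ℤ) * t : ℤ)) : ℝ) / (M : ℝ) = (((w : ℤ) * t : ℤ) : ℝ) := by
      push_cast; field_simp
    rw [this, e_int]
  rw [Finset.sum_congr rfl fun w _ => hterm w]
  simp

lemma sum_range_mul_split (D W : ℕ) (f : ℕ → ℂ) :
    ∑ a ∈ Finset.range (D * W), f a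
      = ∑ u ∈ Finset.range D, ∑ w ∈ Finset.range W, f (u + D * w) := by
  rcases Nat.eq_zero_or_pos D with hD | hD
  · subst hD; simp
  rw [← Finset.sum_product']
  apply Finset.sum_nbij' (i := fun a => (a % D, a / D)) (j := fun uw => uw.1 + D * uw.2)
  · intro a ha
    simp only [Finset.mem_range] at ha
    simp only [Finset.mem_product, Finset.mem_range]
    exact ⟨Nat.mod_lt _ hD, (Nat.div_lt_iff_lt_mul hD).2 (by rwa [mul_comm] at ha)⟩
  · intro uw huw
    simp only [Finset.mem_product, Finset.mem_range] at huw
    simp only [Finset.mem_range]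
    calc uw.1 + D * uw.2 < D + D * uw.2 := by omega
      _ = D * (uw.2 + 1) := by ring
      _ ≤ D * W := Nat.mul_le_mul_left _ (by omega)
  · intro a _; simp [Nat.mod_add_div]
  · intro uw huw
    simp only [Finset.mem_product, Finset.mem_range] at huw
    ext
    · simp [Nat.add_mul_mod_self_left, Nat.mod_eq_of_lt huw.1]
    · simp [Nat.add_mul_div_left _ _ hD, Nat.div_eq_of_lt huw.1]
  · intro a _; rw [Nat.mod_add_div]

lemma sum_filter_mul_split (D W : ℕ) (P P' : ℕ → Prop) [DecidablePred P] [DecidablePred P']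
    (f c : ℕ → ℂ)
    (hPP : ∀ u w, w < W → (P (u + D * w) ↔ P' u))
    (hf : ∀ u w, u < D → w < W → f (u + D * w) = f u * c w) :
    ∑ a ∈ (Finset.range (D * W)).filter P, f a
      = (∑ u ∈ (Finset.range D).filter P', f u) * ∑ w ∈ Finset.range W, c w := by
  rw [Finset.sum_filter, sum_range_mul_split D W (fun a => if P a then f a else 0)]
  rw [Finset.sum_mul, Finset.sum_filter]
  apply Finset.sum_congr rfl
  intro u hu
  simp only [Finset.mem_range] at hu
  rw [Finset.mul_sum]
  by_cases hP : P' u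
  · simp only [hP, if_true]
    apply Finset.sum_congr rfl
    intro w hw
    simp only [Finset.mem_range] at hw
    rw [if_pos ((hPP u w hw).mpr hP), hf u w hu hw]
  · simp only [hP, if_false]
    apply Finset.sum_eq_zero
    intro w hw
    simp only [Finset.mem_range] at hw
    rw [if_neg (fun h => hP ((hPP u w hw).mp h))]

lemma sigma_pow_split (p : ℕ) (hp : p.Prime) (lam q : ℕ) (hqp : Nat.Coprime q p)
    (G : ℕ → ℂ) :
    ∑ r ∈ Finset.range (lam+1),
      ∑ a ∈ (Finset.range (q * p^(lam-r))).filter (fun a => Nat.Coprime a (q*p^(lam-r))),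
        G (p^r * a)
    = ∑ b ∈ (Finset.range (q * p^lam)).filter (fun b => Nat.Coprime b q), G b := by
  haveI : Fact p.Prime := ⟨hp⟩
  have hp0 : 0 < p := hp.pos
  have hp1 : 1 < p := hp.one_lt
  have hpq : Nat.Coprime p q := hqp.symm
  set rf : ℕ → ℕ := fun b => if b = 0 then lam else min (padicValNat p b) lam with hrf
  have hrle : ∀ b, rf b ≤ lam := by
    intro b; simp only [hrf]; split <;> omega
  have hdvd : ∀ b, p ^ (rf b) ∣ b := by
    intro b
    by_cases hb : b = 0
    · simp [hb]
    · simp only [hrf, hb, if_false]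
      exact dvd_trans (pow_dvd_pow p (min_le_left _ _)) pow_padicValNat_dvd
  have hstep : ∑ r ∈ Finset.range (lam+1),
      ∑ a ∈ (Finset.range (q * p^(lam-r))).filter (fun a => Nat.Coprime a (q*p^(lam-r))),
        G (p^r * a)
      = ∑ x ∈ (Finset.range (lam+1)).sigma
          (fun r => (Finset.range (q * p^(lam-r))).filter (fun a => Nat.Coprime a (q*p^(lam-r)))),
          G (p ^ x.1 * x.2) :=
    (Finset.sum_sigma (Finset.range (lam+1))
      (fun r => (Finset.range (q * p^(lam-r))).filter (fun a => Nat.Coprime a (q*p^(lam-r))))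
      (fun x => G (p ^ x.1 * x.2))).symm
  rw [hstep]
  apply Finset.sum_nbij' (i := fun x => p ^ x.1 * x.2) (j := fun b => ⟨rf b, b / p ^ (rf b)⟩)
  · rintro ⟨r, a⟩ hx
    simp only [Finset.mem_sigma, Finset.mem_range, Finset.mem_filter] at hx
    obtain ⟨hr, ha, hcop⟩ := hx
    have hrlam : r ≤ lam := by omega
    simp only [Finset.mem_filter, Finset.mem_range]
    constructor
    · calc p ^ r * a < p ^ r * (q * p ^ (lam - r)) :=
            mul_lt_mul_of_pos_left ha (pow_pos hp0 r)
        _ = q * p ^ lam := by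
            rw [← mul_assoc, mul_comm (p^r) q, mul_assoc, ← pow_add]
            congr 2; omega
    · exact Nat.Coprime.mul ((hpq.pow_left r))
        (hcop.coprime_dvd_right (dvd_mul_right q _))
  · intro b hb
    simp only [Finset.mem_filter, Finset.mem_range] at hb
    obtain ⟨hblt, hbcop⟩ := hb
    simp only [Finset.mem_sigma, Finset.mem_range, Finset.mem_filter]
    have hadvd : (b / p ^ (rf b)) ∣ b := ⟨p ^ (rf b), by
      rw [mul_comm]; exact (Nat.mul_div_cancel' (hdvd b)).symm⟩
    refine ⟨by have := hrle b; omega, ?_, ?_⟩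
    · have h1 : p ^ (rf b) * (b / p ^ (rf b)) = b := Nat.mul_div_cancel' (hdvd b)
      have h2 : q * p ^ lam = p ^ (rf b) * (q * p ^ (lam - rf b)) := by
        rw [← mul_assoc, mul_comm (p ^ rf b) q, mul_assoc, ← pow_add]
        congr 2; have := hrle b; omega
      apply Nat.lt_of_mul_lt_mul_left (a := p ^ (rf b))
      rw [h1, ← h2]; exact hblt
    · apply Nat.Coprime.mul_right
      · exact hbcop.coprime_dvd_left hadvd
      · by_cases hcase : lam - rf b = 0
        · rw [hcase, pow_zero]; exact Nat.coprime_one_right _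
        · have hb0 : b ≠ 0 := by
            intro h0; exact hcase (by simp [hrf, h0])
          have hrfv : rf b = padicValNat p b := by
            simp only [hrf, hb0, if_false] at hcase ⊢
            omega
          have hbb : p ^ (rf b) * (b / p ^ (rf b)) = b := Nat.mul_div_cancel' (hdvd b)
          have hnd : ¬ p ∣ (b / p ^ (rf b)) := by
            intro hdv
            obtain ⟨c, hc⟩ := hdv
            apply pow_succ_padicValNat_not_dvd (p := p) hb0
            have heq : p ^ (padicValNat p b + 1) * c = b := by
              have h3 : p ^ (padicValNat p b + 1) * c = p ^ rf b * (p * c) := by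
                rw [hrfv]; ring
              rw [h3, ← hc]; exact hbb
            exact ⟨c, heq.symm⟩
          exact Nat.Coprime.pow_right _ ((hp.coprime_iff_not_dvd.mpr hnd).symm)
  · rintro ⟨r, a⟩ hx
    simp only [Finset.mem_sigma, Finset.mem_range, Finset.mem_filter] at hx
    obtain ⟨hr, ha, hcop⟩ := hx
    have hrlam : r ≤ lam := by omega
    by_cases ha0 : a = 0
    · subst ha0
      have h1 : q * p ^ (lam - r) = 1 := Nat.coprime_zero_left _ |>.mp hcop
      have hpw : p ^ (lam - r) = 1 := Nat.dvd_one.mp ⟨q, by rw [← h1]; ring⟩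
      have hlr : lam - r = 0 := by
        by_contra hne
        have hd : p ∣ 1 := hpw ▸ dvd_pow_self p hne
        have := Nat.le_of_dvd one_pos hd
        omega
      have hreq : r = lam := by omega
      subst hreq
      simp [hrf]
    · have hb0 : p ^ r * a ≠ 0 := by positivity
      have hval : padicValNat p (p ^ r * a) = r + padicValNat p a := by
        rw [padicValNat.mul (pow_ne_zero r (by omega)) ha0, padicValNat.prime_pow]
      have hrfeq : rf (p ^ r * a) = r := by
        simp only [hrf, hb0, if_false, hval]
        by_cases hcase : r = lam
        · omega
        · have hrl : r < lam := by omega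
          have h1 : Nat.Coprime a (p ^ (lam - r)) :=
            hcop.coprime_dvd_right (dvd_mul_left _ _)
          have h2 : Nat.Coprime a p := (Nat.coprime_pow_right_iff (by omega) _ _).mp h1
          have hpa : ¬ p ∣ a := hp.coprime_iff_not_dvd.mp h2.symm
          have : padicValNat p a = 0 := padicValNat.eq_zero_of_not_dvd hpa
          omega
      have hdiveq : p ^ r * a / p ^ r = a := Nat.mul_div_cancel_left a (pow_pos hp0 r)
      simp only [hrfeq, hdiveq]
  · intro b hb
    exact Nat.mul_div_cancel' (hdvd b)
  · intro x hx
    rfl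

lemma first_inner (p : ℕ) (hp : p.Prime) (lam q : ℕ) (hq : 0 < q)
    (hqp : Nat.Coprime q p) (n : ℤ) :
    ∑ r ∈ Finset.range (lam+1),
      ∑ a ∈ (Finset.range (q * p^(lam-r))).filter (fun a => Nat.Coprime a (q*p^(lam-r))),
        e (((a * n : ℤ) : ℝ) / ((q * p ^ (lam - r) : ℕ) : ℝ))
    = (∑ u ∈ (Finset.range q).filter (fun u => Nat.Coprime u q),
        e (((u * n : ℤ) : ℝ) / ((q * p ^ lam : ℕ) : ℝ)))
      * ∑ w ∈ Finset.range (p^lam), e ((w:ℝ) * (n:ℝ) / ((p^lam : ℕ) : ℝ)) := by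
  have hp0 : 0 < p := hp.pos
  have hqR : ((q:ℝ)) ≠ 0 := by positivity
  have hpR : ((p:ℝ)) ≠ 0 := by positivity
  set G : ℕ → ℂ := fun b => e (((b * n : ℤ) : ℝ) / ((q * p ^ lam : ℕ) : ℝ)) with hG
  have step1 : ∑ r ∈ Finset.range (lam+1),
      ∑ a ∈ (Finset.range (q * p^(lam-r))).filter (fun a => Nat.Coprime a (q*p^(lam-r))),
        e (((a * n : ℤ) : ℝ) / ((q * p ^ (lam - r) : ℕ) : ℝ))
      = ∑ r ∈ Finset.range (lam+1),
      ∑ a ∈ (Finset.range (q * p^(lam-r))).filter (fun a => Nat.Coprime a (q*p^(lam-r))),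
        G (p^r * a) := by
    apply Finset.sum_congr rfl
    intro r hr
    apply Finset.sum_congr rfl
    intro a ha
    simp only [Finset.mem_range] at hr
    have hrlam : r ≤ lam := by omega
    simp only [hG]
    congr 1
    have hsplit : (p:ℝ)^lam = (p:ℝ)^(lam-r) * (p:ℝ)^r := by
      rw [← pow_add]; congr 1; omega
    push_cast
    rw [hsplit]
    field_simp
    try ring
  rw [step1, sigma_pow_split p hp lam q hqp G]
  have step2 := sum_filter_mul_split q (p^lam)
    (fun b => Nat.Coprime b q) (fun u => Nat.Coprime u q)
    G (fun w => e ((w:ℝ) * (n:ℝ) / ((p^lam : ℕ) : ℝ)))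
    (by
      intro u w hw
      exact Nat.coprime_add_mul_left_left u q w)
    (by
      intro u w hu hw
      simp only [hG]
      rw [← e_add]
      congr 1
      push_cast
      field_simp
      try ring)
  exact step2

lemma second_inner (p : ℕ) (hp : p.Prime) (lam s q : ℕ) (hlam : 1 ≤ lam) (hs : 1 ≤ s)
    (hq : 0 < q) (n : ℤ) :
    ∑ a ∈ (Finset.range (q * p^(lam+s))).filter (fun a => Nat.Coprime a (q*p^(lam+s))),
        e (((a * n : ℤ) : ℝ) / ((q * p ^ (lam + s) : ℕ) : ℝ))
    = (∑ u ∈ (Finset.range (q*p^s)).filter (fun u => Nat.Coprime u (q*p^s)),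
        e (((u * n : ℤ) : ℝ) / ((q * p ^ (lam+s) : ℕ) : ℝ)))
      * ∑ w ∈ Finset.range (p^lam), e ((w:ℝ) * (n:ℝ) / ((p^lam : ℕ) : ℝ)) := by
  have hp0 : 0 < p := hp.pos
  have hE : q * p^(lam+s) = (q*p^s) * p^lam := by
    rw [mul_assoc, ← pow_add, Nat.add_comm s lam]
  have hqR : ((q:ℝ)) ≠ 0 := by positivity
  have hpR : ((p:ℝ)) ≠ 0 := by positivity
  have key := sum_filter_mul_split (q*p^s) (p^lam)
    (fun a => Nat.Coprime a (q*p^(lam+s))) (fun u => Nat.Coprime u (q*p^s))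
    (fun a => e (((a * n : ℤ) : ℝ) / ((q * p ^ (lam + s) : ℕ) : ℝ)))
    (fun w => e ((w:ℝ) * (n:ℝ) / ((p^lam : ℕ) : ℝ)))
    (by
      intro u w hw
      have e1 : u + (q*p^s)*w = u + q * (p^s * w) := by ring
      have e2 : u + (q*p^s)*w = u + p * (q * p^(s-1) * w) := by
        rw [show p^s = p * p^(s-1) from by rw [← pow_succ']; congr 1; omega]; ring
      rw [Nat.coprime_mul_iff_right, Nat.coprime_mul_iff_right,
        Nat.coprime_pow_right_iff (show 0 < lam+s by omega),
        Nat.coprime_pow_right_iff (show 0 < s by omega)]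
      constructor
      · rintro ⟨h1, h2⟩
        exact ⟨by rwa [e1, Nat.coprime_add_mul_left_left] at h1,
               by rwa [e2, Nat.coprime_add_mul_left_left] at h2⟩
      · rintro ⟨h1, h2⟩
        exact ⟨by rw [e1]; rwa [Nat.coprime_add_mul_left_left],
               by rw [e2]; rwa [Nat.coprime_add_mul_left_left]⟩)
    (by
      intro u w hu hw
      rw [← e_add]
      congr 1
      have hsplit : (p:ℝ)^(lam+s) = (p:ℝ)^lam * (p:ℝ)^s := by rw [pow_add]
      push_cast
      rw [hsplit]
      field_simp
      try ring)
  rw [← hE] at key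
  exact key

lemma moduli_split (Q : ℝ) (hQ : 1 ≤ Q) (p : ℕ) (hp : p.Prime) (F : ℕ → ℂ) :
    (∑ q ∈ (Finset.Icc 1 ⌊Q⌋₊).filter (fun q => Nat.Coprime q p), F q)
    + ∑ s ∈ Finset.Icc 1 ⌊Real.log Q / Real.log p⌋₊,
        ∑ q ∈ (Finset.Icc 1 ⌊Q / (p:ℝ)^s⌋₊).filter (fun q => Nat.Coprime q p), F (p^s * q)
    = ∑ q' ∈ Finset.Icc 1 ⌊Q⌋₊, F q' := by
  haveI : Fact p.Prime := ⟨hp⟩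
  have hp0 : 0 < p := hp.pos
  have hp1 : 1 < p := hp.one_lt
  have hp1R : (1:ℝ) < (p:ℝ) := by exact_mod_cast hp1
  have hlogp : 0 < Real.log p := Real.log_pos hp1R
  have hQ0 : 0 < Q := by linarith
  set S := ⌊Real.log Q / Real.log p⌋₊ with hS
  set B : ℕ → Finset ℕ := fun s => (Finset.Icc 1 ⌊Q / (p:ℝ)^s⌋₊).filter (fun q => Nat.Coprime q p)
    with hB
  have hfirst : (Finset.Icc 1 ⌊Q⌋₊).filter (fun q => Nat.Coprime q p) = B 0 := by
    simp [hB]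
  have hstep : (∑ q ∈ B 0, F (p^0 * q)) + ∑ s ∈ Finset.Icc 1 S, ∑ q ∈ B s, F (p^s * q)
      = ∑ x ∈ (Finset.Icc 0 S).sigma B, F (p ^ x.1 * x.2) := by
    rw [Finset.sum_sigma (Finset.Icc 0 S) B (fun x => F (p ^ x.1 * x.2))]
    rw [show Finset.Icc 0 S = insert 0 (Finset.Icc 1 S) by ext x; simp; omega]
    rw [Finset.sum_insert (by simp)]
  have hmain : ∑ x ∈ (Finset.Icc 0 S).sigma B, F (p ^ x.1 * x.2)
      = ∑ q' ∈ Finset.Icc 1 ⌊Q⌋₊, F q' := by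
    apply Finset.sum_nbij' (i := fun x => p ^ x.1 * x.2)
      (j := fun q' => ⟨padicValNat p q', q' / p ^ (padicValNat p q')⟩)
    · rintro ⟨s, q⟩ hx
      simp only [Finset.mem_sigma, Finset.mem_Icc, Finset.mem_filter, hB] at hx
      obtain ⟨⟨_, hsS⟩, ⟨hq1, hqle⟩, hqcop⟩ := hx
      simp only [Finset.mem_Icc]
      have hps : (0:ℝ) < (p:ℝ)^s := by positivity
      have hqR : (q:ℝ) ≤ Q / (p:ℝ)^s :=
        (Nat.le_floor_iff (by positivity)).mp hqle
      have h2 : ((p^s * q : ℕ) : ℝ) ≤ Q := by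
        push_cast
        rw [mul_comm]
        exact (le_div_iff₀ hps).mp hqR
      exact ⟨Nat.one_le_iff_ne_zero.mpr (by positivity), Nat.le_floor h2⟩
    · intro q' hq'
      simp only [Finset.mem_Icc] at hq'
      obtain ⟨hq1, hqle⟩ := hq'
      have hq0 : q' ≠ 0 := by omega
      set v := padicValNat p q' with hv
      have hdv : p ^ v ∣ q' := pow_padicValNat_dvd
      have hqd0 : q' / p ^ v ≠ 0 := by
        intro h
        have := Nat.div_mul_cancel hdv
        rw [h] at this; simp at this; exact hq0 this.symm
      have hcancel : q' / p ^ v * p ^ v = q' := Nat.div_mul_cancel hdv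
      simp only [Finset.mem_sigma, Finset.mem_Icc, Finset.mem_filter, hB]
      refine ⟨⟨Nat.zero_le _, ?_⟩, ⟨Nat.one_le_iff_ne_zero.mpr hqd0, ?_⟩, ?_⟩
      · have hpv : (p:ℝ)^v ≤ (q':ℝ) := by
          exact_mod_cast Nat.le_of_dvd (by omega) hdv
        have hq'Q : (q':ℝ) ≤ Q := le_trans (by exact_mod_cast hqle) (Nat.floor_le (le_of_lt hQ0))
        have hlog : (v:ℝ) * Real.log p ≤ Real.log Q := by
          calc (v:ℝ) * Real.log p = Real.log ((p:ℝ)^v) := (Real.log_pow (p:ℝ) v ▸ rfl)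
            _ ≤ Real.log Q := Real.log_le_log (by positivity) (le_trans hpv hq'Q)
        exact Nat.le_floor ((le_div_iff₀ hlogp).mpr hlog)
      · apply Nat.le_floor
        have hps : (0:ℝ) < (p:ℝ)^v := by positivity
        rw [le_div_iff₀ hps]
        have : ((q' / p ^ v : ℕ) : ℝ) * ((p:ℝ)^v) = (q' : ℝ) := by
          rw [show ((p:ℝ)^v) = ((p^v : ℕ) : ℝ) by push_cast; ring]
          exact_mod_cast congrArg (Nat.cast : ℕ → ℝ) hcancel
        rw [this]
        exact le_trans (by exact_mod_cast hqle) (Nat.floor_le (le_of_lt hQ0))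
      · have hnd : ¬ p ∣ q' / p ^ v := by
          intro hdvp
          obtain ⟨c, hc⟩ := hdvp
          apply pow_succ_padicValNat_not_dvd (p := p) hq0
          refine ⟨c, ?_⟩
          rw [pow_succ]
          calc q' = q' / p ^ v * p ^ v := hcancel.symm
            _ = p * c * p ^ v := by rw [hc]
            _ = p ^ v * p * c := by ring
        exact (hp.coprime_iff_not_dvd.mpr hnd).symm
    · rintro ⟨s, q⟩ hx
      simp only [Finset.mem_sigma, Finset.mem_Icc, Finset.mem_filter, hB] at hx
      obtain ⟨⟨_, hsS⟩, ⟨hq1, hqle⟩, hqcop⟩ := hx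
      have hq0 : q ≠ 0 := by omega
      have hnd : ¬ p ∣ q := hp.coprime_iff_not_dvd.mp hqcop.symm
      have hval : padicValNat p (p ^ s * q) = s := by
        rw [padicValNat.mul (pow_ne_zero s (by omega)) hq0, padicValNat.prime_pow,
          padicValNat.eq_zero_of_not_dvd hnd, add_zero]
      have hdiv : p ^ s * q / p ^ s = q := Nat.mul_div_cancel_left q (pow_pos hp0 s)
      simp only [hval, hdiv]
    · intro q' hq'
      exact Nat.mul_div_cancel' pow_padicValNat_dvd
    · intro x hx; rfl
  rw [hfirst]
  calc (∑ q ∈ B 0, F q) + ∑ s ∈ Finset.Icc 1 S, ∑ q ∈ B s, F (p^s * q)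
      = (∑ q ∈ B 0, F (p^0 * q)) + ∑ s ∈ Finset.Icc 1 S, ∑ q ∈ B s, F (p^s * q) := by
        simp
    _ = ∑ q' ∈ Finset.Icc 1 ⌊Q⌋₊, F q' := by rw [hstep, hmain]

theorem stmt_0 (Q : ℝ) (hQ : 1 ≤ Q) (p : ℕ) (hp : p.Prime) (k lam : ℕ)
    (hlam : 1 ≤ lam) (hlamk : lam ≤ k)
    (g : ℕ → ℝ → ℂ)
    (hg : ∀ q : ℕ, 1 ≤ q → Integrable (g q))
    (hDFI : ∀ n : ℤ, deltaZ n =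
      (1 / (Q : ℂ)) * ∑ q ∈ Finset.Icc 1 ⌊Q⌋₊, (1 / (q : ℂ)) *
        ∑ a ∈ (Finset.range q).filter (fun a => Nat.Coprime a q),
          e (((n * a : ℤ) : ℝ) / (q : ℝ)) *
            ∫ x : ℝ, g q x * e ((n : ℝ) * x / (q * Q))) :
    ∀ n : ℤ, deltaZ n =
      (∑ r ∈ Finset.range (lam + 1),
        (1 / (Q : ℂ)) *
          ∑ q ∈ (Finset.Icc 1 ⌊Q⌋₊).filter (fun q => Nat.Coprime q p),
            (1 / ((q : ℂ) * (p : ℂ) ^ lam)) *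
              ∑ a ∈ (Finset.range (q * p ^ (lam - r))).filter
                  (fun a => Nat.Coprime a (q * p ^ (lam - r))),
                e (((a * n : ℤ) : ℝ) / ((q * p ^ (lam - r) : ℕ) : ℝ)) *
                  ∫ x : ℝ, g q x * e ((n : ℝ) * x / (Q * q * p ^ lam)))
      + ∑ s ∈ Finset.Icc 1 ⌊Real.log Q / Real.log p⌋₊,
          (1 / (Q : ℂ)) *
            ∑ q ∈ (Finset.Icc 1 ⌊Q / (p : ℝ) ^ s⌋₊).filter (fun q => Nat.Coprime q p),
              (1 / ((q : ℂ) * (p : ℂ) ^ (lam + s))) *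
                ∑ a ∈ (Finset.range (q * p ^ (lam + s))).filter
                    (fun a => Nat.Coprime a (q * p ^ (lam + s))),
                  e (((a * n : ℤ) : ℝ) / ((q * p ^ (lam + s) : ℕ) : ℝ)) *
                    ∫ x : ℝ, g (p ^ s * q) x *
                      e ((n : ℝ) * x / (Q * q * p ^ (lam + s))) := by
  intro n
  have hp0 : 0 < p := hp.pos
  have hQ0 : (0:ℝ) < Q := by linarith
  have hQC : (Q:ℂ) ≠ 0 := by
    simp only [ne_eq, Complex.ofReal_eq_zero]; positivity
  have hpC : ((p:ℂ)) ≠ 0 := by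
    simp only [ne_eq, Nat.cast_eq_zero]; omega
  -- Step 1: factor the first big sum
  have hS1 : (∑ r ∈ Finset.range (lam + 1),
        (1 / (Q : ℂ)) *
          ∑ q ∈ (Finset.Icc 1 ⌊Q⌋₊).filter (fun q => Nat.Coprime q p),
            (1 / ((q : ℂ) * (p : ℂ) ^ lam)) *
              ∑ a ∈ (Finset.range (q * p ^ (lam - r))).filter
                  (fun a => Nat.Coprime a (q * p ^ (lam - r))),
                e (((a * n : ℤ) : ℝ) / ((q * p ^ (lam - r) : ℕ) : ℝ)) *
                  ∫ x : ℝ, g q x * e ((n : ℝ) * x / (Q * q * p ^ lam)))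
      = (1 / (Q : ℂ)) *
          ∑ q ∈ (Finset.Icc 1 ⌊Q⌋₊).filter (fun q => Nat.Coprime q p),
            ((1 / ((q : ℂ) * (p : ℂ) ^ lam)) *
              (∫ x : ℝ, g q x * e ((n : ℝ) * x / (Q * q * p ^ lam)))) *
            ((∑ u ∈ (Finset.range q).filter (fun u => Nat.Coprime u q),
                e (((u * n : ℤ) : ℝ) / ((q * p ^ lam : ℕ) : ℝ)))
              * ∑ w ∈ Finset.range (p^lam), e ((w:ℝ) * (n:ℝ) / ((p^lam : ℕ) : ℝ))) := by
    rw [← Finset.mul_sum]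
    congr 1
    rw [Finset.sum_comm]
    apply Finset.sum_congr rfl
    intro q hq
    simp only [Finset.mem_filter, Finset.mem_Icc] at hq
    obtain ⟨⟨hq1, _⟩, hqp⟩ := hq
    calc ∑ r ∈ Finset.range (lam + 1),
            (1 / ((q : ℂ) * (p : ℂ) ^ lam)) *
              ∑ a ∈ (Finset.range (q * p ^ (lam - r))).filter
                  (fun a => Nat.Coprime a (q * p ^ (lam - r))),
                e (((a * n : ℤ) : ℝ) / ((q * p ^ (lam - r) : ℕ) : ℝ)) *
                  ∫ x : ℝ, g q x * e ((n : ℝ) * x / (Q * q * p ^ lam))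
        = ∑ r ∈ Finset.range (lam + 1),
            ((1 / ((q : ℂ) * (p : ℂ) ^ lam)) *
              (∫ x : ℝ, g q x * e ((n : ℝ) * x / (Q * q * p ^ lam)))) *
              ∑ a ∈ (Finset.range (q * p ^ (lam - r))).filter
                  (fun a => Nat.Coprime a (q * p ^ (lam - r))),
                e (((a * n : ℤ) : ℝ) / ((q * p ^ (lam - r) : ℕ) : ℝ)) := by
          apply Finset.sum_congr rfl
          intro r _
          rw [← Finset.sum_mul]
          ring
      _ = ((1 / ((q : ℂ) * (p : ℂ) ^ lam)) *
              (∫ x : ℝ, g q x * e ((n : ℝ) * x / (Q * q * p ^ lam)))) *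
            ∑ r ∈ Finset.range (lam + 1),
              ∑ a ∈ (Finset.range (q * p ^ (lam - r))).filter
                  (fun a => Nat.Coprime a (q * p ^ (lam - r))),
                e (((a * n : ℤ) : ℝ) / ((q * p ^ (lam - r) : ℕ) : ℝ)) := by
          rw [Finset.mul_sum]
      _ = _ := by rw [first_inner p hp lam q hq1 hqp n]
  -- Step 2: factor the second big sum
  have hS2 : (∑ s ∈ Finset.Icc 1 ⌊Real.log Q / Real.log p⌋₊,
          (1 / (Q : ℂ)) *
            ∑ q ∈ (Finset.Icc 1 ⌊Q / (p : ℝ) ^ s⌋₊).filter (fun q => Nat.Coprime q p),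
              (1 / ((q : ℂ) * (p : ℂ) ^ (lam + s))) *
                ∑ a ∈ (Finset.range (q * p ^ (lam + s))).filter
                    (fun a => Nat.Coprime a (q * p ^ (lam + s))),
                  e (((a * n : ℤ) : ℝ) / ((q * p ^ (lam + s) : ℕ) : ℝ)) *
                    ∫ x : ℝ, g (p ^ s * q) x *
                      e ((n : ℝ) * x / (Q * q * p ^ (lam + s))))
      = (1 / (Q : ℂ)) * ∑ s ∈ Finset.Icc 1 ⌊Real.log Q / Real.log p⌋₊,
            ∑ q ∈ (Finset.Icc 1 ⌊Q / (p : ℝ) ^ s⌋₊).filter (fun q => Nat.Coprime q p),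
              ((1 / ((q : ℂ) * (p : ℂ) ^ (lam + s))) *
                (∫ x : ℝ, g (p ^ s * q) x *
                      e ((n : ℝ) * x / (Q * q * p ^ (lam + s))))) *
              ((∑ u ∈ (Finset.range (q * p^s)).filter (fun u => Nat.Coprime u (q * p^s)),
                  e (((u * n : ℤ) : ℝ) / ((q * p ^ (lam + s) : ℕ) : ℝ)))
                * ∑ w ∈ Finset.range (p^lam), e ((w:ℝ) * (n:ℝ) / ((p^lam : ℕ) : ℝ))) := by
    rw [← Finset.mul_sum]
    congr 1
    apply Finset.sum_congr rfl
    intro s hs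
    simp only [Finset.mem_Icc] at hs
    apply Finset.sum_congr rfl
    intro q hq
    simp only [Finset.mem_filter, Finset.mem_Icc] at hq
    obtain ⟨⟨hq1, _⟩, hqp⟩ := hq
    rw [← Finset.sum_mul]
    rw [second_inner p hp lam s q hlam hs.1 hq1 n]
    ring
  rw [hS1, hS2]
  by_cases hdvd : ((p:ℤ)^lam ∣ n)
  · -- divisible case
    obtain ⟨m, hm⟩ := hdvd
    have hmR : (n:ℝ) = (p:ℝ)^lam * (m:ℝ) := by rw [hm]; push_cast; ring
    have hWv : ∑ w ∈ Finset.range (p^lam), e ((w:ℝ) * (n:ℝ) / ((p^lam : ℕ) : ℝ))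
        = ((p:ℂ))^lam := by
      rw [sum_e_full_dvd (p^lam) n (by
        have hc : ((p^lam : ℕ) : ℤ) = (p:ℤ)^lam := by push_cast; ring
        rw [hc]; exact ⟨m, hm⟩)]
      push_cast; ring
    rw [hWv]
    -- convert first sum terms
    have hconv1 : ∑ q ∈ (Finset.Icc 1 ⌊Q⌋₊).filter (fun q => Nat.Coprime q p),
            ((1 / ((q : ℂ) * (p : ℂ) ^ lam)) *
              (∫ x : ℝ, g q x * e ((n : ℝ) * x / (Q * q * p ^ lam)))) *
            ((∑ u ∈ (Finset.range q).filter (fun u => Nat.Coprime u q),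
                e (((u * n : ℤ) : ℝ) / ((q * p ^ lam : ℕ) : ℝ))) * ((p:ℂ))^lam)
        = ∑ q ∈ (Finset.Icc 1 ⌊Q⌋₊).filter (fun q => Nat.Coprime q p),
            (1 / (q : ℂ)) *
              ∑ a ∈ (Finset.range q).filter (fun a => Nat.Coprime a q),
                e (((m * a : ℤ) : ℝ) / (q : ℝ)) *
                  ∫ x : ℝ, g q x * e ((m : ℝ) * x / (q * Q)) := by
      apply Finset.sum_congr rfl
      intro q hq
      simp only [Finset.mem_filter, Finset.mem_Icc] at hq
      obtain ⟨⟨hq1, _⟩, hqp⟩ := hq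
      have hqR : ((q:ℝ)) ≠ 0 := by
        simp only [ne_eq, Nat.cast_eq_zero]; omega
      have hqC : ((q:ℂ)) ≠ 0 := by
        simp only [ne_eq, Nat.cast_eq_zero]; omega
      have hpR : ((p:ℝ)) ≠ 0 := by
        simp only [ne_eq, Nat.cast_eq_zero]; omega
      have hargU : ∀ u : ℕ, (((u * n : ℤ) : ℝ) / ((q * p ^ lam : ℕ) : ℝ))
          = (((m * u : ℤ) : ℝ) / (q : ℝ)) := by
        intro u
        push_cast
        rw [hmR]
        field_simp
      have hfunI : ∀ x : ℝ, ((n : ℝ) * x / (Q * q * p ^ lam)) = ((m : ℝ) * x / (q * Q)) := by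
        intro x
        rw [hmR]
        field_simp
      simp only [hargU, hfunI]
      rw [← Finset.sum_mul]
      field_simp
    -- convert second sum terms
    have hconv2 : ∑ s ∈ Finset.Icc 1 ⌊Real.log Q / Real.log p⌋₊,
            ∑ q ∈ (Finset.Icc 1 ⌊Q / (p : ℝ) ^ s⌋₊).filter (fun q => Nat.Coprime q p),
              ((1 / ((q : ℂ) * (p : ℂ) ^ (lam + s))) *
                (∫ x : ℝ, g (p ^ s * q) x *
                      e ((n : ℝ) * x / (Q * q * p ^ (lam + s))))) *
              ((∑ u ∈ (Finset.range (q * p^s)).filter (fun u => Nat.Coprime u (q * p^s)),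
                  e (((u * n : ℤ) : ℝ) / ((q * p ^ (lam + s) : ℕ) : ℝ))) * ((p:ℂ))^lam)
        = ∑ s ∈ Finset.Icc 1 ⌊Real.log Q / Real.log p⌋₊,
            ∑ q ∈ (Finset.Icc 1 ⌊Q / (p : ℝ) ^ s⌋₊).filter (fun q => Nat.Coprime q p),
              (1 / ((p^s * q : ℕ) : ℂ)) *
                ∑ a ∈ (Finset.range (p^s * q)).filter (fun a => Nat.Coprime a (p^s * q)),
                  e (((m * a : ℤ) : ℝ) / ((p^s * q : ℕ) : ℝ)) *
                    ∫ x : ℝ, g (p^s * q) x * e ((m : ℝ) * x / ((p^s * q : ℕ) * Q)) := by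
      apply Finset.sum_congr rfl
      intro s hs
      simp only [Finset.mem_Icc] at hs
      apply Finset.sum_congr rfl
      intro q hq
      simp only [Finset.mem_filter, Finset.mem_Icc] at hq
      obtain ⟨⟨hq1, _⟩, hqp⟩ := hq
      have hqR : ((q:ℝ)) ≠ 0 := by
        simp only [ne_eq, Nat.cast_eq_zero]; omega
      have hqC : ((q:ℂ)) ≠ 0 := by
        simp only [ne_eq, Nat.cast_eq_zero]; omega
      have hpR : ((p:ℝ)) ≠ 0 := by
        simp only [ne_eq, Nat.cast_eq_zero]; omega
      have hargV : ∀ u : ℕ, (((u * n : ℤ) : ℝ) / ((q * p ^ (lam + s) : ℕ) : ℝ))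
          = (((m * u : ℤ) : ℝ) / ((p^s * q : ℕ) : ℝ)) := by
        intro u
        push_cast
        rw [hmR, pow_add]
        field_simp
      have hfunJ : ∀ x : ℝ, ((n : ℝ) * x / (Q * q * p ^ (lam + s)))
          = ((m : ℝ) * x / ((p^s * q : ℕ) * Q)) := by
        intro x
        rw [hmR, pow_add]
        push_cast
        field_simp
      simp only [hargV, hfunJ]
      have hsetswap : (Finset.range (q * p^s)).filter (fun u => Nat.Coprime u (q * p^s))
          = (Finset.range (p^s * q)).filter (fun a => Nat.Coprime a (p^s * q)) := by
        rw [Nat.mul_comm q (p^s)]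
      rw [hsetswap, ← Finset.sum_mul]
      push_cast
      rw [pow_add]
      field_simp
    rw [hconv1, hconv2]
    have hmod := moduli_split Q hQ p hp (fun q' =>
      (1 / (q' : ℂ)) *
        ∑ a ∈ (Finset.range q').filter (fun a => Nat.Coprime a q'),
          e (((m * a : ℤ) : ℝ) / (q' : ℝ)) *
            ∫ x : ℝ, g q' x * e ((m : ℝ) * x / (q' * Q)))
    simp only [] at hmod
    rw [← mul_add, hmod]
    have hpz : ((p:ℤ))^lam ≠ 0 := pow_ne_zero _ (by
      simp only [ne_eq, Int.natCast_eq_zero]; omega)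
    have hiff : n = 0 ↔ m = 0 := by
      rw [hm]; simp [hpz]
    have hdel : deltaZ n = deltaZ m := by
      unfold deltaZ; simp only [hiff]
    rw [hdel]
    exact hDFI m
  · -- non-divisible case
    have hW0 : ∑ w ∈ Finset.range (p^lam), e ((w:ℝ) * (n:ℝ) / ((p^lam : ℕ) : ℝ)) = 0 := by
      apply sum_e_full_zero
      intro hdd
      apply hdvd
      have hc : ((p^lam : ℕ) : ℤ) = (p:ℤ)^lam := by push_cast; ring
      rwa [hc] at hdd
    have hn0 : n ≠ 0 := fun h => hdvd (h ▸ dvd_zero _)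
    rw [hW0]
    simp [deltaZ, hn0]
end

section
/- Let a < b be real numbers, let w be a smooth complex-valued function supported on [a,b], and let ϱ be a real-valued smooth function on an open neighborhood of [a,b]. Suppose there are parameters Q, U, Y, Z, R > 0 and constants C_i, C_j such that |ϱ^{(i)}(x)| ≤ C_i · Y/Q^i for all i ≥ 2, |w^{(j)}(x)| ≤ C_j · Z/U^j for all j ≥ 0, and |ϱ'(x)| ≥ R for all x ∈ [a,b]. Then for every A ≥ 0 there is a constant C(A), depending only on A and finitely many of the constants C_i, C_j, such that |∫_ℝ w(y) e^{iϱ(y)} dy| ≤ C(A) · (b−a) · Z · ( Y/(R²Q²) + 1/(RQ) + 1/(RU) )^A. -/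
/-!
STATEMENT 1: the non-stationary-phase upper bound for exponential integrals
(Lemma 8.1 of Blomer–Khan–Young; Lemma A.1 of Aggarwal–Holowinsky–Lin–Qi).
The constant `C` depends only on `A` and the families of constants
`Cw`, `Cϱ` bounding the derivatives of the weight and the phase.
-/

open scoped BigOperators

open Set MeasureTheory Complex

lemma iDW_open {F : Type*} [NormedAddCommGroup F] [NormedSpace ℝ F] {f : ℝ → F} {s : Set ℝ}
    (hs : IsOpen s) {x : ℝ} (hx : x ∈ s) (n : ℕ) :
    iteratedDerivWithin n f s x = iteratedDeriv n f x := by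
  simp [iteratedDerivWithin, iteratedDeriv, iteratedFDerivWithin_of_isOpen n hs hx]

lemma natle (k : ℕ) : (k : WithTop ℕ∞) ≤ ((⊤:ℕ∞) : WithTop ℕ∞) := by
  exact_mod_cast le_top

structure NSPData (Cw Cϱ : ℕ → ℝ) : Type where
  a : ℝ
  b : ℝ
  w : ℝ → ℂ
  ϱ : ℝ → ℝ
  Q : ℝ
  U : ℝ
  Y : ℝ
  Z : ℝ
  R : ℝ
  hab : a < b
  hQ : 0 < Q
  hU : 0 < U
  hY : 0 < Y
  hZ : 0 < Z
  hR : 0 < R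
  hw : ContDiff ℝ (⊤:ℕ∞) w
  hsupp : Function.support w ⊆ Set.Icc a b
  Uo : Set ℝ
  hUo : IsOpen Uo
  hUo2 : Set.Icc a b ⊆ Uo
  hϱ : ContDiffOn ℝ (⊤:ℕ∞) ϱ Uo
  hϱd : ∀ i, 2 ≤ i → ∀ x ∈ Set.Icc a b, |iteratedDeriv i ϱ x| ≤ Cϱ i * Y / Q ^ i
  hwd : ∀ j x, ‖iteratedDeriv j w x‖ ≤ Cw j * Z / U ^ j
  hlow : ∀ x ∈ Set.Icc a b, R ≤ |deriv ϱ x|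

namespace NSPData
variable {Cw Cϱ : ℕ → ℝ} (S : NSPData Cw Cϱ)

noncomputable def E : ℝ := 1/S.U + 1/S.Q + S.Y/(S.R*S.Q^2)
noncomputable def T : ℝ := S.Y/(S.R^2*S.Q^2) + 1/(S.R*S.Q) + 1/(S.R*S.U)
def V : Set ℝ := S.Uo ∩ (deriv S.ϱ) ⁻¹' ({0}ᶜ)
noncomputable def ψ : ℝ → ℂ := fun x => (Complex.I * ((deriv S.ϱ x : ℝ) : ℂ))⁻¹
noncomputable def g : ℕ → ℝ → ℂ
  | 0 => S.w
  | n+1 => deriv (fun x => g n x * NSPData.ψ S x)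

lemma hE : 0 < S.E := by
  have := S.hQ; have := S.hU; have := S.hY; have := S.hR
  unfold E; positivity

lemma hT : 0 < S.T := by
  have := S.hQ; have := S.hU; have := S.hY; have := S.hR
  unfold T; positivity

lemma RT : S.R * S.T = S.E := by
  have hQ := S.hQ.ne'; have hU := S.hU.ne'; have hR := S.hR.ne'
  unfold T E; field_simp; ring

lemma hφcont : ContinuousOn (deriv S.ϱ) S.Uo :=
  S.hϱ.continuousOn_deriv_of_isOpen S.hUo (by exact_mod_cast le_top)

lemma hVo : IsOpen S.V := S.hφcont.isOpen_inter_preimage S.hUo (isOpen_compl_singleton)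

lemma hVUo : S.V ⊆ S.Uo := Set.inter_subset_left

lemma hIccV : Set.Icc S.a S.b ⊆ S.V := by
  intro x hx
  refine ⟨S.hUo2 hx, ?_⟩
  have := S.hlow x hx
  simp only [Set.mem_preimage, Set.mem_compl_iff, Set.mem_singleton_iff]
  intro h
  rw [h] at this; simp at this; linarith [S.hR]

lemma hφne : ∀ x ∈ S.V, deriv S.ϱ x ≠ 0 := fun x hx => hx.2

lemma hUDV : UniqueDiffOn ℝ S.V := S.hVo.uniqueDiffOn

lemma hφcd : ContDiffOn ℝ (⊤:ℕ∞) (deriv S.ϱ) S.V :=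
  (S.hϱ.deriv_of_isOpen S.hUo (by exact_mod_cast le_top)).mono S.hVUo

lemma hψcd : ContDiffOn ℝ (⊤:ℕ∞) S.ψ S.V := by
  apply ContDiffOn.inv
  · exact (contDiffOn_const.mul (Complex.ofRealCLM.contDiff.comp_contDiffOn S.hφcd))
  · intro x hx
    simp only [ne_eq, mul_eq_zero, Complex.I_ne_zero, false_or, Complex.ofReal_eq_zero]
    exact S.hφne x hx



lemma g_succ (n : ℕ) : S.g (n+1) = deriv (fun x => S.g n x * S.ψ x) := rfl

lemma g_prop (n : ℕ) : ContDiff ℝ (⊤:ℕ∞) (S.g n) ∧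
    Function.support (S.g n) ⊆ Set.Icc S.a S.b := by
  induction n with
  | zero => exact ⟨S.hw, S.hsupp⟩
  | succ n ih =>
    obtain ⟨hsm, hsp⟩ := ih
    have hz : ∀ x ∉ Set.Icc S.a S.b, S.g n x = 0 := by
      intro x hx
      by_contra h
      exact hx (hsp h)
    have hprod : ContDiff ℝ (⊤:ℕ∞) (fun x => S.g n x * S.ψ x) := by
      rw [contDiff_iff_contDiffAt]
      intro x
      by_cases hx : x ∈ S.V
      · exact (hsm.contDiffOn.mul S.hψcd).contDiffAt (S.hVo.mem_nhds hx)
      · have hx' : x ∈ (Set.Icc S.a S.b)ᶜ := fun h => hx (S.hIccV h)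
        have hev : (fun x => S.g n x * S.ψ x) =ᶠ[nhds x] (fun _ => 0) := by
          filter_upwards [(isClosed_Icc.isOpen_compl).mem_nhds hx'] with y hy
          rw [hz y hy, zero_mul]
        exact contDiffAt_const.congr_of_eventuallyEq hev
    constructor
    · rw [g_succ]
      exact (contDiff_infty_iff_deriv.mp hprod).2
    · intro x hx
      by_contra hmem
      apply hx
      have hev : (fun x => S.g n x * S.ψ x) =ᶠ[nhds x] (fun _ => 0) := by
        filter_upwards [(isClosed_Icc.isOpen_compl).mem_nhds hmem] with y hy
        rw [hz y hy, zero_mul]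
      show deriv (fun x => S.g n x * S.ψ x) x = 0
      rw [hev.deriv_eq]
      simp

lemma g_smooth (n : ℕ) : ContDiff ℝ (⊤:ℕ∞) (S.g n) := (S.g_prop n).1

lemma g_zero (n : ℕ) : ∀ x ∉ Set.Icc S.a S.b, S.g n x = 0 := by
  intro x hx
  by_contra h
  exact hx ((S.g_prop n).2 h)



lemma phi_hasDerivAt {x : ℝ} (hx : x ∈ S.V) :
    HasDerivAt (deriv S.ϱ) (deriv (deriv S.ϱ) x) x := by
  have : DifferentiableAt ℝ (deriv S.ϱ) x :=
    (S.hφcd.differentiableOn (by simp)).differentiableAt (S.hVo.mem_nhds hx)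
  exact this.hasDerivAt

lemma psi_deriv {x : ℝ} (hx : x ∈ S.V) :
    derivWithin S.ψ S.V x =
      (-Complex.I * ((deriv (deriv S.ϱ) x : ℝ) : ℂ)) * (S.ψ x * S.ψ x) := by
  have hne : (Complex.I * ((deriv S.ϱ x : ℝ) : ℂ)) ≠ 0 := by
    simp only [ne_eq, mul_eq_zero, Complex.I_ne_zero, false_or, Complex.ofReal_eq_zero]
    exact S.hφne x hx
  have h1 : HasDerivAt (fun y => Complex.I * ((deriv S.ϱ y : ℝ) : ℂ))
      (Complex.I * ((deriv (deriv S.ϱ) x : ℝ) : ℂ)) x :=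
    ((S.phi_hasDerivAt hx).ofReal_comp).const_mul Complex.I
  have h2 : HasDerivAt (fun z : ℂ => z⁻¹)
      (-((Complex.I * ((deriv S.ϱ x : ℝ) : ℂ)) ^ 2)⁻¹) (Complex.I * ((deriv S.ϱ x : ℝ) : ℂ)) :=
    hasDerivAt_inv hne
  have h3 : HasDerivAt S.ψ
      (-((Complex.I * ((deriv S.ϱ x : ℝ) : ℂ)) ^ 2)⁻¹ *
        (Complex.I * ((deriv (deriv S.ϱ) x : ℝ) : ℂ))) x := h2.comp x h1
  rw [derivWithin_of_isOpen S.hVo hx, h3.deriv]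
  unfold ψ
  field_simp


lemma hφ'cd : ContDiffOn ℝ (⊤:ℕ∞) (deriv (deriv S.ϱ)) S.V :=
  S.hφcd.deriv_of_isOpen S.hVo (by exact_mod_cast le_top)

lemma E_ge_U : 1/S.U ≤ S.E := by
  have := S.hQ; have := S.hU; have := S.hY; have := S.hR
  unfold E
  have h1 : 0 < 1/S.Q := by positivity
  have h2 : 0 ≤ S.Y/(S.R*S.Q^2) := by positivity
  linarith

lemma E_ge_Q : 1/S.Q ≤ S.E := by
  have := S.hQ; have := S.hU; have := S.hY; have := S.hR
  unfold E
  have h1 : 0 < 1/S.U := by positivity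
  have h2 : 0 ≤ S.Y/(S.R*S.Q^2) := by positivity
  linarith

lemma E_ge_YRQ : S.Y/(S.R*S.Q^2) ≤ S.E := by
  have := S.hQ; have := S.hU; have := S.hY; have := S.hR
  unfold E
  have h1 : 0 < 1/S.U := by positivity
  have h2 : 0 < 1/S.Q := by positivity
  linarith

lemma aux_ineq (i : ℕ) : S.Y / S.Q^(i+2) ≤ S.R * S.E^(i+1) := by
  have hQ := S.hQ; have hR := S.hR; have hY := S.hY
  have h1 : (1/S.Q)^i ≤ S.E^i := pow_le_pow_left₀ (by positivity) S.E_ge_Q i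
  have h2 : S.Y/(S.R*S.Q^2) * (1/S.Q)^i ≤ S.E * S.E^i := by
    apply mul_le_mul S.E_ge_YRQ h1 (by positivity) (le_of_lt S.hE)
  have heq : S.Y / S.Q^(i+2) = S.R * (S.Y/(S.R*S.Q^2) * (1/S.Q)^i) := by
    rw [one_div, inv_pow, pow_add]
    field_simp
  rw [heq]
  calc S.R * (S.Y/(S.R*S.Q^2) * (1/S.Q)^i) ≤ S.R * (S.E * S.E^i) :=
        mul_le_mul_of_nonneg_left h2 (le_of_lt hR)
    _ = S.R * S.E^(i+1) := by rw [← pow_succ']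

lemma u_bound (i : ℕ) {x : ℝ} (hx : x ∈ Set.Icc S.a S.b) :
    ‖iteratedDerivWithin i (fun y => -Complex.I * ((deriv (deriv S.ϱ) y : ℝ) : ℂ)) S.V x‖ ≤
      max (Cϱ (i+2)) 0 * (S.R * S.E^(i+1)) := by
  have hxV : x ∈ S.V := S.hIccV hx
  have hof : ContDiffOn ℝ (⊤:ℕ∞) (fun y => ((deriv (deriv S.ϱ) y : ℝ) : ℂ)) S.V :=
    Complex.ofRealCLM.contDiff.comp_contDiffOn S.hφ'cd
  have e1 : (fun y => -Complex.I * ((deriv (deriv S.ϱ) y : ℝ) : ℂ)) =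
      (-Complex.I) • (fun y => ((deriv (deriv S.ϱ) y : ℝ) : ℂ)) := by
    funext y; simp [smul_eq_mul]
  rw [e1, iteratedDerivWithin_const_smul hxV S.hUDV (-Complex.I) ((hof.of_le (natle i)) x hxV)]
  rw [norm_smul]
  have e2 : ‖iteratedDerivWithin i (fun y => ((deriv (deriv S.ϱ) y : ℝ) : ℂ)) S.V x‖ =
      ‖iteratedDerivWithin i (deriv (deriv S.ϱ)) S.V x‖ := by
    rw [← norm_iteratedFDerivWithin_eq_norm_iteratedDerivWithin,
      ← norm_iteratedFDerivWithin_eq_norm_iteratedDerivWithin]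
    exact Complex.ofRealLI.norm_iteratedFDerivWithin_comp_left (S.hφ'cd x hxV) S.hUDV hxV (natle i)
  rw [e2, iDW_open S.hVo hxV]
  have e3 : iteratedDeriv i (deriv (deriv S.ϱ)) x = iteratedDeriv (i+2) S.ϱ x := by
    rw [show i + 2 = (i+1)+1 by ring, iteratedDeriv_succ', iteratedDeriv_succ']
  have hb := S.hϱd (i+2) (by omega) x hx
  have : ‖iteratedDeriv i (deriv (deriv S.ϱ)) x‖ ≤ Cϱ (i+2) * S.Y / S.Q^(i+2) := by
    rw [e3]; exact hb
  simp only [norm_neg, Complex.norm_I, one_mul]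
  calc ‖iteratedDeriv i (deriv (deriv S.ϱ)) x‖ ≤ Cϱ (i+2) * S.Y / S.Q^(i+2) := this
    _ ≤ max (Cϱ (i+2)) 0 * (S.Y / S.Q^(i+2)) := by
        rw [mul_div_assoc]
        exact mul_le_mul_of_nonneg_right (le_max_left _ _)
          (div_nonneg S.hY.le (pow_nonneg S.hQ.le _))
    _ ≤ max (Cϱ (i+2)) 0 * (S.R * S.E^(i+1)) := by
        apply mul_le_mul_of_nonneg_left (S.aux_ineq i) (le_max_right _ _)

lemma mul3_le {a b c b' c' : ℝ} (ha : 0 ≤ a) (hb : b ≤ b') (hc : c ≤ c')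
    (hb0 : 0 ≤ b) (hc0 : 0 ≤ c) (hb'0 : 0 ≤ b') : a*b*c ≤ a*b'*c' :=
  mul_le_mul (mul_le_mul_of_nonneg_left hb ha) hc hc0 (mul_nonneg ha hb'0)

lemma sum_choose_real (m : ℕ) : ∑ p ∈ Finset.range (m+1), (m.choose p : ℝ) = 2^m := by
  rw [← Nat.cast_sum, Nat.sum_range_choose]
  push_cast
  ring

lemma psi_bound (Cw Cϱ : ℕ → ℝ) (k : ℕ) : ∃ c : ℝ, 0 < c ∧
    ∀ (S : NSPData Cw Cϱ) (l : ℕ), l ≤ k → ∀ x ∈ Set.Icc S.a S.b,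
      ‖iteratedDerivWithin l S.ψ S.V x‖ ≤ c / S.R * S.E ^ l := by
  induction k with
  | zero =>
    refine ⟨1, one_pos, ?_⟩
    intro S l hl x hx
    have hl0 : l = 0 := Nat.le_zero.mp hl
    subst hl0
    rw [iteratedDerivWithin_zero, pow_zero, mul_one]
    have hlow := S.hlow x hx
    have : ‖S.ψ x‖ = |deriv S.ϱ x|⁻¹ := by
      unfold NSPData.ψ
      rw [norm_inv, norm_mul, Complex.norm_I, one_mul, Complex.norm_real, Real.norm_eq_abs]
    rw [this, one_div]
    exact inv_anti₀ S.hR hlow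
  | succ k ih =>
    obtain ⟨c, hc, hbψ⟩ := ih
    set Msum : ℝ := ∑ i ∈ Finset.range (k+1), (k.choose i : ℝ) * max (Cϱ (i+2)) 0 * 2^(k-i)
      with hMsumdef
    have hMsum : 0 ≤ Msum := by
      apply Finset.sum_nonneg
      intro i _
      have : (0:ℝ) ≤ max (Cϱ (i+2)) 0 := le_max_right _ _
      positivity
    refine ⟨c + (Msum + 1) * c^2, by positivity, ?_⟩
    intro S l hl x hx
    have hxV : x ∈ S.V := S.hIccV hx
    have hRpos := S.hR
    have hEpos := S.hE
    by_cases hlk : l ≤ k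
    · refine le_trans (hbψ S l hlk x hx) ?_
      have : c ≤ c + (Msum + 1) * c^2 := by nlinarith
      gcongr
    · have hl1 : l = k+1 := by omega
      subst hl1
      rw [iteratedDerivWithin_succ',
        iteratedDerivWithin_congr
          (fun y hy => S.psi_deriv hy :
            Set.EqOn (derivWithin S.ψ S.V)
              (fun y => (-Complex.I * ((deriv (deriv S.ϱ) y : ℝ) : ℂ)) * (S.ψ y * S.ψ y)) S.V)
          hxV]
      -- bound for the square factor
      have hvb : ∀ m, m ≤ k →
          ‖iteratedFDerivWithin ℝ m (fun y => S.ψ y * S.ψ y) S.V x‖ ≤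
            2^m * (c/S.R)^2 * S.E^m := by
        intro m hm
        refine le_trans
          (norm_iteratedFDerivWithin_mul_le S.hψcd S.hψcd S.hUDV hxV (natle m)) ?_
        have hterm : ∀ p ∈ Finset.range (m+1),
            (m.choose p : ℝ) * ‖iteratedFDerivWithin ℝ p S.ψ S.V x‖ *
              ‖iteratedFDerivWithin ℝ (m-p) S.ψ S.V x‖ ≤
            (m.choose p : ℝ) * ((c/S.R)^2 * S.E^m) := by
          intro p hp
          have hp' : p ≤ m := Finset.mem_range_succ_iff.mp hp
          have b1 : ‖iteratedFDerivWithin ℝ p S.ψ S.V x‖ ≤ c/S.R * S.E^p := by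
            rw [norm_iteratedFDerivWithin_eq_norm_iteratedDerivWithin]
            exact hbψ S p (le_trans hp' hm) x hx
          have b2 : ‖iteratedFDerivWithin ℝ (m-p) S.ψ S.V x‖ ≤ c/S.R * S.E^(m-p) := by
            rw [norm_iteratedFDerivWithin_eq_norm_iteratedDerivWithin]
            exact hbψ S (m-p) (le_trans (Nat.sub_le _ _) hm) x hx
          have hEe : S.E^p * S.E^(m-p) = S.E^m := by
            rw [← pow_add]
            congr 1
            omega
          calc (m.choose p : ℝ) * ‖iteratedFDerivWithin ℝ p S.ψ S.V x‖ *
                ‖iteratedFDerivWithin ℝ (m-p) S.ψ S.V x‖ ≤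
              (m.choose p : ℝ) * (c/S.R * S.E^p) * (c/S.R * S.E^(m-p)) :=
                mul3_le (Nat.cast_nonneg _) b1 b2 (norm_nonneg _) (norm_nonneg _)
                  (by positivity)
            _ = (m.choose p : ℝ) * ((c/S.R)^2 * S.E^m) := by
                rw [← hEe]; ring
        refine le_trans (Finset.sum_le_sum hterm) ?_
        rw [← Finset.sum_mul, sum_choose_real]
        apply le_of_eq
        ring
      -- main estimate
      rw [← norm_iteratedFDerivWithin_eq_norm_iteratedDerivWithin]
      refine le_trans
        (norm_iteratedFDerivWithin_mul_le
          (contDiffOn_const.mul (Complex.ofRealCLM.contDiff.comp_contDiffOn S.hφ'cd))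
          (S.hψcd.mul S.hψcd) S.hUDV hxV (natle k)) ?_
      have hterm : ∀ i ∈ Finset.range (k+1),
          (k.choose i : ℝ) *
            ‖iteratedFDerivWithin ℝ i
              (fun y => -Complex.I * ((deriv (deriv S.ϱ) y : ℝ) : ℂ)) S.V x‖ *
            ‖iteratedFDerivWithin ℝ (k-i) (fun y => S.ψ y * S.ψ y) S.V x‖ ≤
          ((k.choose i : ℝ) * max (Cϱ (i+2)) 0 * 2^(k-i)) * (c^2 / S.R * S.E^(k+1)) := by
        intro i hi
        have hi' : i ≤ k := Finset.mem_range_succ_iff.mp hi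
        have b1 : ‖iteratedFDerivWithin ℝ i
            (fun y => -Complex.I * ((deriv (deriv S.ϱ) y : ℝ) : ℂ)) S.V x‖ ≤
            max (Cϱ (i+2)) 0 * (S.R * S.E^(i+1)) := by
          rw [norm_iteratedFDerivWithin_eq_norm_iteratedDerivWithin]
          exact S.u_bound i hx
        have b2 := hvb (k-i) (Nat.sub_le _ _)
        have hEe : S.E^(i+1) * S.E^(k-i) = S.E^(k+1) := by
          rw [← pow_add]
          congr 1
          omega
        calc (k.choose i : ℝ) *
              ‖iteratedFDerivWithin ℝ i
                (fun y => -Complex.I * ((deriv (deriv S.ϱ) y : ℝ) : ℂ)) S.V x‖ *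
              ‖iteratedFDerivWithin ℝ (k-i) (fun y => S.ψ y * S.ψ y) S.V x‖ ≤
            (k.choose i : ℝ) * (max (Cϱ (i+2)) 0 * (S.R * S.E^(i+1))) *
              (2^(k-i) * (c/S.R)^2 * S.E^(k-i)) :=
              mul3_le (Nat.cast_nonneg _) b1 b2 (norm_nonneg _) (norm_nonneg _)
                (by positivity)
          _ = ((k.choose i : ℝ) * max (Cϱ (i+2)) 0 * 2^(k-i)) * (c^2 / S.R * S.E^(k+1)) := by
              rw [← hEe]
              field_simp
      refine le_trans (Finset.sum_le_sum hterm) ?_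
      rw [← Finset.sum_mul, ← hMsumdef]
      have h1 : Msum * c^2 ≤ c + (Msum + 1) * c^2 := by nlinarith
      calc Msum * (c^2 / S.R * S.E^(k+1)) = (Msum * c^2) / S.R * S.E^(k+1) := by ring
        _ ≤ (c + (Msum + 1) * c^2) / S.R * S.E^(k+1) := by gcongr

lemma g_bound (Cw Cϱ : ℕ → ℝ) (n : ℕ) : ∀ j : ℕ, ∃ c : ℝ, 0 < c ∧
    ∀ (S : NSPData Cw Cϱ) (l : ℕ), l ≤ j → ∀ x ∈ Set.Icc S.a S.b,
      ‖iteratedDerivWithin l (S.g n) S.V x‖ ≤ c * S.Z * S.T^n * S.E^l := by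
  induction n with
  | zero =>
    intro j
    refine ⟨1 + ∑ i ∈ Finset.range (j+1), max (Cw i) 0, by positivity, ?_⟩
    intro S l hl x hx
    have hxV : x ∈ S.V := S.hIccV hx
    have hU := S.hU
    have hZ := S.hZ
    have hEpos := S.hE
    have hsum : max (Cw l) 0 ≤ 1 + ∑ i ∈ Finset.range (j+1), max (Cw i) 0 := by
      have h1 : max (Cw l) 0 ≤ ∑ i ∈ Finset.range (j+1), max (Cw i) 0 :=
        Finset.single_le_sum (f := fun i => max (Cw i) 0)
          (fun i _ => le_max_right _ _) (Finset.mem_range_succ_iff.mpr hl)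
      linarith
    have e1 : iteratedDerivWithin l (S.g 0) S.V x = iteratedDeriv l S.w x :=
      iDW_open S.hVo hxV l
    rw [e1]
    have hpow : (1/S.U)^l ≤ S.E^l := pow_le_pow_left₀ (by positivity) S.E_ge_U l
    calc ‖iteratedDeriv l S.w x‖ ≤ Cw l * S.Z / S.U^l := S.hwd l x
      _ ≤ max (Cw l) 0 * S.Z * (1/S.U)^l := by
          rw [one_div, inv_pow, ← div_eq_mul_inv, mul_div_assoc, mul_div_assoc]
          gcongr
          · exact le_max_left _ _
      _ ≤ (1 + ∑ i ∈ Finset.range (j+1), max (Cw i) 0) * S.Z * S.E^l := by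
          apply mul_le_mul (mul_le_mul_of_nonneg_right hsum hZ.le) hpow
            (by positivity) (by positivity)
      _ = (1 + ∑ i ∈ Finset.range (j+1), max (Cw i) 0) * S.Z * S.T^0 * S.E^l := by
          rw [pow_zero, mul_one]
  | succ n ih =>
    intro j
    obtain ⟨cg, hcg, hg⟩ := ih (j+1)
    obtain ⟨cψ, hcψ, hψb⟩ := psi_bound Cw Cϱ (j+1)
    refine ⟨2^(j+1) * cg * cψ, by positivity, ?_⟩
    intro S l hl x hx
    have hxV : x ∈ S.V := S.hIccV hx
    have hZ := S.hZ
    have hRpos := S.hR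
    have hTpos := S.hT
    have hEpos := S.hE
    have e1 : iteratedDerivWithin l (S.g (n+1)) S.V x =
        iteratedDerivWithin (l+1) (fun y => S.g n y * S.ψ y) S.V x := by
      rw [iDW_open S.hVo hxV, iDW_open S.hVo hxV, S.g_succ, ← iteratedDeriv_succ']
    rw [e1, ← norm_iteratedFDerivWithin_eq_norm_iteratedDerivWithin]
    refine le_trans
      (norm_iteratedFDerivWithin_mul_le ((S.g_smooth n).contDiffOn) S.hψcd S.hUDV hxV
        (natle (l+1))) ?_
    have hterm : ∀ i ∈ Finset.range (l+2),
        ((l+1).choose i : ℝ) * ‖iteratedFDerivWithin ℝ i (S.g n) S.V x‖ *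
          ‖iteratedFDerivWithin ℝ (l+1-i) S.ψ S.V x‖ ≤
        ((l+1).choose i : ℝ) * (cg * cψ * S.Z * S.T^(n+1) * S.E^l) := by
      intro i hi
      have hi' : i ≤ l+1 := Finset.mem_range_succ_iff.mp hi
      have b1 : ‖iteratedFDerivWithin ℝ i (S.g n) S.V x‖ ≤ cg * S.Z * S.T^n * S.E^i := by
        rw [norm_iteratedFDerivWithin_eq_norm_iteratedDerivWithin]
        exact hg S i (le_trans hi' (by omega)) x hx
      have b2 : ‖iteratedFDerivWithin ℝ (l+1-i) S.ψ S.V x‖ ≤ cψ / S.R * S.E^(l+1-i) := by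
        rw [norm_iteratedFDerivWithin_eq_norm_iteratedDerivWithin]
        exact hψb S (l+1-i) (by omega) x hx
      have hEe : S.E^i * S.E^(l+1-i) = S.E^(l+1) := by
        rw [← pow_add]
        congr 1
        omega
      have hTE : S.T * S.E^l = (1/S.R) * S.E^(l+1) := by
        rw [← S.RT]
        field_simp
        ring
      calc ((l+1).choose i : ℝ) * ‖iteratedFDerivWithin ℝ i (S.g n) S.V x‖ *
            ‖iteratedFDerivWithin ℝ (l+1-i) S.ψ S.V x‖ ≤
          ((l+1).choose i : ℝ) * (cg * S.Z * S.T^n * S.E^i) * (cψ / S.R * S.E^(l+1-i)) :=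
            mul3_le (Nat.cast_nonneg _) b1 b2 (norm_nonneg _) (norm_nonneg _) (by positivity)
        _ = ((l+1).choose i : ℝ) * (cg * cψ * S.Z * S.T^(n+1) * S.E^l) := by
            rw [pow_succ, mul_comm (S.T^n) S.T, ← mul_assoc]
            rw [show cg * cψ * S.Z * (S.T * S.T^n) * S.E^l =
              cg * cψ * S.Z * S.T^n * (S.T * S.E^l) by ring, hTE, ← hEe]
            field_simp
    refine le_trans (Finset.sum_le_sum hterm) ?_
    rw [← Finset.sum_mul]
    rw [show (l+2) = (l+1)+1 by ring, sum_choose_real]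
    have h2 : (2:ℝ)^(l+1) ≤ 2^(j+1) := by
      apply pow_le_pow_right₀ (by norm_num) (by omega)
    calc (2:ℝ)^(l+1) * (cg * cψ * S.Z * S.T^(n+1) * S.E^l) ≤
        2^(j+1) * (cg * cψ * S.Z * S.T^(n+1) * S.E^l) := by
          apply mul_le_mul_of_nonneg_right h2 (by positivity)
      _ = 2^(j+1) * cg * cψ * S.Z * S.T^(n+1) * S.E^l := by ring

lemma exp_contOn : ContinuousOn (fun y => Complex.exp (Complex.I * (S.ϱ y : ℂ))) S.Uo :=
  Complex.continuous_exp.comp_continuousOn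
    (continuousOn_const.mul (Complex.continuous_ofReal.comp_continuousOn S.hϱ.continuousOn))

lemma integral_step (n : ℕ) :
    ∫ y : ℝ, S.g n y * Complex.exp (Complex.I * (S.ϱ y : ℂ)) =
      - ∫ y : ℝ, S.g (n+1) y * Complex.exp (Complex.I * (S.ϱ y : ℂ)) := by
  obtain ⟨δ, hδ, hsub⟩ :=
    (isCompact_Icc : IsCompact (Set.Icc S.a S.b)).exists_cthickening_subset_open S.hVo S.hIccV
  have hab := S.hab
  set a' := S.a - δ with ha'
  set b' := S.b + δ with hb'
  have hab' : a' ≤ b' := by simp only [ha', hb']; linarith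
  have hIcc' : Set.Icc a' b' ⊆ S.V := by
    intro y hy
    apply hsub
    refine Metric.mem_cthickening_of_dist_le y (max S.a (min y S.b)) δ _
      ⟨le_max_left _ _, max_le hab.le (min_le_right _ _)⟩ ?_
    rw [Real.dist_eq, abs_le]
    rcases le_total y S.b with h | h
    · rw [min_eq_left h]
      rcases le_total y S.a with h2 | h2
      · rw [max_eq_left h2]
        constructor <;> [linarith [hy.1]; linarith]
      · rw [max_eq_right h2]
        constructor <;> linarith
    · rw [min_eq_right h, max_eq_right hab.le]
      constructor <;> [linarith; linarith [hy.2]]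
  have hsubUo : Set.Icc a' b' ⊆ S.Uo := fun y hy => S.hVUo (hIcc' hy)
  have hIccsub : Set.Icc S.a S.b ⊆ Set.Ioc a' b' := by
    intro y hy
    exact ⟨by simp only [ha']; linarith [hy.1], by simp only [hb']; linarith [hy.2]⟩
  -- derivative computation
  have hderiv : ∀ y ∈ Set.uIcc a' b',
      HasDerivAt (fun t => S.g n t * S.ψ t * Complex.exp (Complex.I * (S.ϱ t : ℂ)))
        (S.g (n+1) y * Complex.exp (Complex.I * (S.ϱ y : ℂ)) +
          S.g n y * Complex.exp (Complex.I * (S.ϱ y : ℂ))) y := by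
    intro y hy
    rw [Set.uIcc_of_le hab'] at hy
    have hyV : y ∈ S.V := hIcc' hy
    have h1 : HasDerivAt (fun t => S.g n t * S.ψ t) (S.g (n+1) y) y := by
      have hdiff : DifferentiableAt ℝ (fun t => S.g n t * S.ψ t) y :=
        (((S.g_smooth n).contDiffOn.mul S.hψcd).differentiableOn
          (by simp)).differentiableAt (S.hVo.mem_nhds hyV)
      have := hdiff.hasDerivAt
      rwa [show deriv (fun t => S.g n t * S.ψ t) y = S.g (n+1) y from rfl] at this
    have hϱdiff : HasDerivAt S.ϱ (deriv S.ϱ y) y :=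
      ((S.hϱ.differentiableOn (by simp)).differentiableAt
        (S.hUo.mem_nhds (S.hVUo hyV))).hasDerivAt
    have h2 : HasDerivAt (fun t => Complex.exp (Complex.I * (S.ϱ t : ℂ)))
        (Complex.exp (Complex.I * (S.ϱ y : ℂ)) * (Complex.I * (deriv S.ϱ y : ℝ))) y :=
      (hϱdiff.ofReal_comp.const_mul Complex.I).cexp
    have h3 := h1.mul h2
    have hne : (Complex.I * ((deriv S.ϱ y : ℝ) : ℂ)) ≠ 0 := by
      simp only [ne_eq, mul_eq_zero, Complex.I_ne_zero, false_or, Complex.ofReal_eq_zero]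
      exact S.hφne y hyV
    have heq : S.g (n+1) y * Complex.exp (Complex.I * (S.ϱ y : ℂ)) +
        S.g n y * S.ψ y * (Complex.exp (Complex.I * (S.ϱ y : ℂ)) *
          (Complex.I * (deriv S.ϱ y : ℝ))) =
        S.g (n+1) y * Complex.exp (Complex.I * (S.ϱ y : ℂ)) +
          S.g n y * Complex.exp (Complex.I * (S.ϱ y : ℂ)) := by
      congr 1
      have hψ1 : S.ψ y * (Complex.I * ((deriv S.ϱ y : ℝ) : ℂ)) = 1 := by
        unfold NSPData.ψ
        exact inv_mul_cancel₀ hne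
      calc S.g n y * S.ψ y * (Complex.exp (Complex.I * (S.ϱ y : ℂ)) *
            (Complex.I * (deriv S.ϱ y : ℝ))) =
          S.g n y * Complex.exp (Complex.I * (S.ϱ y : ℂ)) *
            (S.ψ y * (Complex.I * ((deriv S.ϱ y : ℝ) : ℂ))) := by ring
        _ = S.g n y * Complex.exp (Complex.I * (S.ϱ y : ℂ)) := by rw [hψ1, mul_one]
    rw [← heq]
    exact h3
  -- continuity of integrands
  have hcont : ∀ m : ℕ, ContinuousOn
      (fun y => S.g m y * Complex.exp (Complex.I * (S.ϱ y : ℂ))) (Set.Icc a' b') :=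
    fun m => ((S.g_smooth m).continuous.continuousOn).mul (S.exp_contOn.mono hsubUo)
  have hint : ∀ m : ℕ, IntervalIntegrable
      (fun y => S.g m y * Complex.exp (Complex.I * (S.ϱ y : ℂ))) volume a' b' := by
    intro m
    apply ContinuousOn.intervalIntegrable
    rw [Set.uIcc_of_le hab']
    exact hcont m
  have hFTC := intervalIntegral.integral_eq_sub_of_hasDerivAt hderiv
    (((hint (n+1)).add (hint n)))
  have hzero : ∀ m : ℕ, ∀ y, y ∉ Set.Ioc a' b' →
      S.g m y * Complex.exp (Complex.I * (S.ϱ y : ℂ)) = 0 := by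
    intro m y hy
    rw [S.g_zero m y (fun hmem => hy (hIccsub hmem)), zero_mul]
  have hglobal : ∀ m : ℕ, (∫ y : ℝ, S.g m y * Complex.exp (Complex.I * (S.ϱ y : ℂ))) =
      ∫ y in a'..b', S.g m y * Complex.exp (Complex.I * (S.ϱ y : ℂ)) := by
    intro m
    rw [intervalIntegral.integral_of_le hab',
      setIntegral_eq_integral_of_forall_compl_eq_zero (hzero m)]
  have hends : (fun t => S.g n t * S.ψ t * Complex.exp (Complex.I * (S.ϱ t : ℂ))) b' -
      (fun t => S.g n t * S.ψ t * Complex.exp (Complex.I * (S.ϱ t : ℂ))) a' = 0 := by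
    have hza : S.g n a' = 0 := S.g_zero n a' (by
      intro h
      have := h.1
      simp only [ha'] at this
      linarith)
    have hzb : S.g n b' = 0 := S.g_zero n b' (by
      intro h
      have := h.2
      simp only [hb'] at this
      linarith)
    simp [hza, hzb]
  rw [intervalIntegral.integral_add (hint (n+1)) (hint n), hends] at hFTC
  rw [hglobal n, hglobal (n+1)]
  linear_combination hFTC
  
lemma norm_integral_eq (n : ℕ) :
    ‖∫ y : ℝ, S.w y * Complex.exp (Complex.I * (S.ϱ y : ℂ))‖ =
      ‖∫ y : ℝ, S.g n y * Complex.exp (Complex.I * (S.ϱ y : ℂ))‖ := by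
  induction n with
  | zero => rfl
  | succ n ih => rw [ih, S.integral_step n, norm_neg]

lemma norm_exp_eq (y : ℝ) : ‖Complex.exp (Complex.I * ((S.ϱ y : ℝ) : ℂ))‖ = 1 := by
  rw [Complex.norm_exp]
  simp

lemma final_bound (n : ℕ) {c : ℝ} (hc : 0 < c)
    (hb : ∀ x ∈ Set.Icc S.a S.b, ‖S.g n x‖ ≤ c * S.Z * S.T^n) :
    ‖∫ y : ℝ, S.w y * Complex.exp (Complex.I * (S.ϱ y : ℂ))‖ ≤
      c * (S.b - S.a) * S.Z * S.T^n := by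
  rw [S.norm_integral_eq n]
  have hzero : ∀ y, y ∉ Set.Icc S.a S.b →
      S.g n y * Complex.exp (Complex.I * (S.ϱ y : ℂ)) = 0 := by
    intro y hy
    rw [S.g_zero n y hy, zero_mul]
  rw [← setIntegral_eq_integral_of_forall_compl_eq_zero hzero]
  have hmeas : AEStronglyMeasurable (fun y => S.g n y * Complex.exp (Complex.I * (S.ϱ y : ℂ)))
      (volume.restrict (Set.Icc S.a S.b)) := by
    apply ContinuousOn.aestronglyMeasurable _ measurableSet_Icc
    exact ((S.g_smooth n).continuous.continuousOn).mul
      ((S.exp_contOn.mono S.hVUo).mono S.hIccV)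
  have hvol : volume (Set.Icc S.a S.b) < ⊤ := by
    rw [Real.volume_Icc]
    exact ENNReal.ofReal_lt_top
  have hle := norm_setIntegral_le_of_norm_le_const (μ := volume) (C := c * S.Z * S.T^n)
      (f := fun y => S.g n y * Complex.exp (Complex.I * (S.ϱ y : ℂ))) hvol
    (fun x hx => by
      rw [norm_mul, S.norm_exp_eq x, mul_one]
      exact hb x hx)
  calc ‖∫ y in Set.Icc S.a S.b, S.g n y * Complex.exp (Complex.I * (S.ϱ y : ℂ))‖ ≤
      c * S.Z * S.T^n * (volume (Set.Icc S.a S.b)).toReal := hle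
    _ = c * (S.b - S.a) * S.Z * S.T^n := by
        rw [Real.volume_Icc, ENNReal.toReal_ofReal (by linarith [S.hab] : 0 ≤ S.b - S.a)]
        ring

end NSPData

theorem stmt_1 (Cw Cϱ : ℕ → ℝ) (A : ℝ) (hA : 0 ≤ A) :
    ∃ C : ℝ, 0 < C ∧
      ∀ (a b : ℝ) (w : ℝ → ℂ) (ϱ : ℝ → ℝ) (Q U Y Z R : ℝ),
        a < b → 0 < Q → 0 < U → 0 < Y → 0 < Z → 0 < R →
        ContDiff ℝ (⊤ : ℕ∞) w → Function.support w ⊆ Set.Icc a b →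
        (∃ Uo : Set ℝ, IsOpen Uo ∧ Set.Icc a b ⊆ Uo ∧ ContDiffOn ℝ (⊤ : ℕ∞) ϱ Uo) →
        (∀ i : ℕ, 2 ≤ i → ∀ x ∈ Set.Icc a b, |iteratedDeriv i ϱ x| ≤ Cϱ i * Y / Q ^ i) →
        (∀ j : ℕ, ∀ x : ℝ, ‖iteratedDeriv j w x‖ ≤ Cw j * Z / U ^ j) →
        (∀ x ∈ Set.Icc a b, R ≤ |deriv ϱ x|) →
        ‖∫ y : ℝ, w y * Complex.exp (Complex.I * (ϱ y : ℂ))‖ ≤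
          C * (b - a) * Z *
            (Y / (R ^ 2 * Q ^ 2) + 1 / (R * Q) + 1 / (R * U)) ^ A := by
  set n : ℕ := ⌈A⌉₊ with hn
  obtain ⟨c0, hc0, hb0⟩ := NSPData.g_bound Cw Cϱ 0 0
  obtain ⟨cn, hcn, hbn⟩ := NSPData.g_bound Cw Cϱ n 0
  refine ⟨c0 + cn, by positivity, ?_⟩
  intro a b w ϱ Q U Y Z R hab hQ hU hY hZ hR hw hsupp hUo hϱd hwd hlow
  obtain ⟨Uo, hUoOpen, hUoSub, hϱsm⟩ := hUo
  set S : NSPData Cw Cϱ := ⟨a, b, w, ϱ, Q, U, Y, Z, R, hab, hQ, hU, hY, hZ, hR,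
    hw.of_le (by simp), hsupp, Uo, hUoOpen, hUoSub, hϱsm.of_le (by simp), hϱd, hwd, hlow⟩ with hSdef
  set T : ℝ := Y / (R ^ 2 * Q ^ 2) + 1 / (R * Q) + 1 / (R * U) with hT
  have hTS : S.T = T := rfl
  have hTpos : 0 < T := by positivity
  have key : ∀ m : ℕ, ∀ c : ℝ, 0 < c →
      (∀ (S' : NSPData Cw Cϱ) (l : ℕ), l ≤ 0 → ∀ x ∈ Set.Icc S'.a S'.b,
        ‖iteratedDerivWithin l (S'.g m) S'.V x‖ ≤ c * S'.Z * S'.T^m * S'.E^l) →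
      ‖∫ y : ℝ, w y * Complex.exp (Complex.I * (ϱ y : ℂ))‖ ≤ c * (b - a) * Z * T^m := by
    intro m c hc hbd
    have := S.final_bound m hc (fun x hx => by
      have h := hbd S 0 le_rfl x hx
      rwa [iteratedDerivWithin_zero, pow_zero, mul_one] at h)
    exact this
  by_cases hT1 : T ≤ 1
  · have h1 := key n cn hcn hbn
    have h2 : T^(n:ℝ) ≤ T^A := by
      rw [← Real.rpow_natCast T n] at *
      exact Real.rpow_le_rpow_of_exponent_ge hTpos hT1 (Nat.le_ceil A)
    have h3 : (T:ℝ)^(n:ℕ) = T^((n:ℕ):ℝ) := (Real.rpow_natCast T n).symm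
    calc ‖∫ y : ℝ, w y * Complex.exp (Complex.I * (ϱ y : ℂ))‖ ≤
        cn * (b - a) * Z * T^(n:ℕ) := h1
      _ ≤ cn * (b - a) * Z * T^A := by
          rw [h3]
          exact mul_le_mul_of_nonneg_left h2
            (by nlinarith [mul_pos (sub_pos.mpr hab) hZ])
      _ ≤ (c0 + cn) * (b - a) * Z * T^A := by
          have : 0 ≤ T^A := Real.rpow_nonneg hTpos.le A
          nlinarith [mul_pos (sub_pos.mpr hab) hZ, mul_nonneg (mul_nonneg (sub_pos.mpr hab).le hZ.le) this]
  · have h1 := key 0 c0 hc0 hb0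
    have h2 : (1:ℝ) ≤ T^A := Real.one_le_rpow (by linarith) hA
    calc ‖∫ y : ℝ, w y * Complex.exp (Complex.I * (ϱ y : ℂ))‖ ≤
        c0 * (b - a) * Z * T^(0:ℕ) := h1
      _ = c0 * (b - a) * Z := by rw [pow_zero, mul_one]
      _ ≤ (c0 + cn) * (b - a) * Z := by
          nlinarith [mul_pos (sub_pos.mpr hab) hZ]
      _ = (c0 + cn) * (b - a) * Z * 1 := by ring
      _ ≤ (c0 + cn) * (b - a) * Z * T^A := by
          apply mul_le_mul_of_nonneg_left h2
          nlinarith [mul_pos (sub_pos.mpr hab) hZ]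
end

section
/- With the notation and assumptions of the character-sum setup (see context), if n₂ = 0 then 𝔠₁* vanishes unless q = q', and in that case |𝔠₁*| ≪ q̂² · gcd(q̂, m − m'), with an absolute implied constant. -/
open scoped BigOperators

/-- `e` evaluated at a residue class `x` modulo `n`: `e(x/n)`. -/
noncomputable def eZM (n : ℕ) (x : ZMod n) : ℂ := e ((x.val : ℝ) / (n : ℝ))

/-- The Kloosterman sum `S(u,v;c) = ∑*_{x mod c} e((ux + v·x̄)/c)`,
with the arguments `u`, `v` given as residues modulo `c`. -/
noncomputable def kloos (c : ℕ) (u v : ZMod c) : ℂ :=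
  ∑ x ∈ (Finset.range c).filter (fun x => Nat.Coprime x c),
    eZM c (u * (x : ZMod c) + v * ((x : ZMod c))⁻¹)

/-- The character sum
`𝔠(m,a,q,n₁',n₁'',n₂) = S(ā·(p̂)̄, η n₂·(p̂)̄; q̂) ·
  ∑*_{c mod p^λ} χ̄(m − c p^{k−λ}) S(c̄·(q̂)̄, η n₂·(q̂)̄; p̂)`,
expressed using `q̂ = q/n₁'` and `p̂ = p^λ/n₁''`. -/
noncomputable def cfrak (p k lam : ℕ) (χ : DirichletCharacter ℂ (p ^ k))
    (qh ph : ℕ) (η m a n₂ : ℤ) : ℂ :=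
  kloos qh (((a : ZMod qh))⁻¹ * ((ph : ZMod qh))⁻¹)
      (((η * n₂ : ℤ) : ZMod qh) * ((ph : ZMod qh))⁻¹) *
    ∑ c ∈ (Finset.range (p ^ lam)).filter (fun c => Nat.Coprime c (p ^ lam)),
      (starRingEnd ℂ) (χ ((m - (c : ℤ) * (p : ℤ) ^ (k - lam) : ℤ) : ZMod (p ^ k))) *
        kloos ph (((c : ZMod ph))⁻¹ * ((qh : ZMod ph))⁻¹)
          (((η * n₂ : ℤ) : ZMod ph) * ((qh : ZMod ph))⁻¹)

/-- `𝔠*(n₂) = ∑_{β mod q̂ q̂' p̂} 𝔠(m,a,q,...,β) conj(𝔠(m',a',q',...,β))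
e(η n₂ β/(q̂ q̂' p̂))`. -/
noncomputable def cstar (p k lam : ℕ) (χ : DirichletCharacter ℂ (p ^ k))
    (qh qh' ph : ℕ) (η m m' a a' n₂ : ℤ) : ℂ :=
  ∑ β ∈ Finset.range (qh * qh' * ph),
    cfrak p k lam χ qh ph η m a (β : ℤ) *
      (starRingEnd ℂ) (cfrak p k lam χ qh' ph η m' a' (β : ℤ)) *
      eZM (qh * qh' * ph) (((η * n₂ : ℤ) : ZMod (qh * qh' * ph)) * ((β : ℕ) : ZMod (qh * qh' * ph)))

/-- `𝔠₁* = ∑_{b mod q̂q̂'} S(a(p̂)̄, b(p̂)̄; q̂) S(a'(p̂)̄, b(p̂)̄; q̂')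
e(n₂ (p̂)̄ b/(q̂ q̂'))`. -/
noncomputable def c1star (qh qh' ph : ℕ) (a a' n₂ : ℤ) : ℂ :=
  ∑ b ∈ Finset.range (qh * qh'),
    kloos qh ((a : ZMod qh) * ((ph : ZMod qh))⁻¹) ((b : ZMod qh) * ((ph : ZMod qh))⁻¹) *
      kloos qh' ((a' : ZMod qh') * ((ph : ZMod qh'))⁻¹) ((b : ZMod qh') * ((ph : ZMod qh'))⁻¹) *
      eZM (qh * qh') ((n₂ : ZMod (qh * qh')) * ((ph : ZMod (qh * qh')))⁻¹ * ((b : ℕ) : ZMod (qh * qh')))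

/-- `𝔠₂* = ∑_{b mod p̂} [∑*_{c₁ mod p^λ} χ̄(m − c₁p^{k−λ}) S(c̄₁(q̂)̄, b(q̂)̄; p̂)]
· [∑*_{c₂ mod p^λ} χ(m' − c₂p^{k−λ}) S(c̄₂(q̂')̄, b(q̂')̄; p̂)] · e((q̂q̂')̄ b n₂/p̂)`. -/
noncomputable def c2star (p k lam : ℕ) (χ : DirichletCharacter ℂ (p ^ k))
    (qh qh' ph : ℕ) (m m' n₂ : ℤ) : ℂ :=
  ∑ b ∈ Finset.range ph,
    (∑ c₁ ∈ (Finset.range (p ^ lam)).filter (fun c => Nat.Coprime c (p ^ lam)),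
        (starRingEnd ℂ) (χ ((m - (c₁ : ℤ) * (p : ℤ) ^ (k - lam) : ℤ) : ZMod (p ^ k))) *
          kloos ph (((c₁ : ZMod ph))⁻¹ * ((qh : ZMod ph))⁻¹) ((b : ZMod ph) * ((qh : ZMod ph))⁻¹)) *
      (∑ c₂ ∈ (Finset.range (p ^ lam)).filter (fun c => Nat.Coprime c (p ^ lam)),
        χ ((m' - (c₂ : ℤ) * (p : ℤ) ^ (k - lam) : ℤ) : ZMod (p ^ k)) *
          kloos ph (((c₂ : ZMod ph))⁻¹ * ((qh' : ZMod ph))⁻¹) ((b : ZMod ph) * ((qh' : ZMod ph))⁻¹)) *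
      eZM ph ((((qh * qh' : ℕ) : ZMod ph))⁻¹ * ((b : ℕ) : ZMod ph) * ((n₂ : ℤ) : ZMod ph))


section Aux
open Finset

noncomputable def zet (n : ℕ) : ℂ := Complex.exp (2 * Real.pi * Complex.I / n)

lemma zet_prim {n : ℕ} (hn : n ≠ 0) : IsPrimitiveRoot (zet n) n :=
  Complex.isPrimitiveRoot_exp n hn

lemma zet_pow_eq_one_iff {n : ℕ} (hn : n ≠ 0) (k : ℕ) : zet n ^ k = 1 ↔ n ∣ k :=
  (zet_prim hn).pow_eq_one_iff_dvd k

lemma eZM_eq (n : ℕ) (x : ZMod n) : eZM n x = zet n ^ x.val := by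
  rcases eq_or_ne n 0 with rfl | hn
  · simp [eZM, e, zet]
  · rw [eZM, e, zet, ← Complex.exp_nat_mul]
    congr 1
    have : (n : ℂ) ≠ 0 := Nat.cast_ne_zero.mpr hn
    push_cast
    field_simp

lemma zet_pow_mod (n : ℕ) (hn : n ≠ 0) (k : ℕ) : zet n ^ (k % n) = zet n ^ k := by
  conv_rhs => rw [← Nat.mod_add_div k n, pow_add, pow_mul,
    (zet_prim hn).pow_eq_one, one_pow, mul_one]

lemma zet_pow_div (g n : ℕ) (hg : g ≠ 0) : zet (g * n) ^ g = zet n := by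
  rcases eq_or_ne n 0 with rfl | hn
  · simp [zet, ← Complex.exp_nat_mul]
  rw [zet, zet, ← Complex.exp_nat_mul]
  congr 1
  have h1 : (g : ℂ) ≠ 0 := Nat.cast_ne_zero.mpr hg
  have h2 : (n : ℂ) ≠ 0 := Nat.cast_ne_zero.mpr hn
  push_cast
  field_simp

lemma geom_root (N : ℕ) (z : ℂ) (hzN : z ^ N = 1) :
    ∑ b ∈ range N, z ^ b = if z = 1 then (N : ℂ) else 0 := by
  split_ifs with h
  · simp [h]
  · rw [geom_sum_eq h, hzN]; simp

lemma full_sum (n : ℕ) (hn : 0 < n) :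
    ∑ x ∈ range n, zet n ^ x = if n = 1 then 1 else 0 := by
  rcases eq_or_ne n 1 with rfl | h1
  · simp [zet]
  · rw [geom_root n _ (zet_prim hn.ne').pow_eq_one, if_neg, if_neg h1]
    intro h
    exact h1 (Nat.dvd_one.mp (((zet_prim hn.ne').pow_eq_one_iff_dvd 1).mp (by simpa using h)))

lemma sum_div' (n : ℕ) (hn : 0 < n) :
    ∑ d ∈ n.divisors, (∑ y ∈ (range d).filter (fun y => Nat.Coprime y d), zet d ^ y)
      = ∑ x ∈ range n, zet n ^ x := by
  rw [Finset.sum_sigma']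
  refine Finset.sum_nbij' (i := fun p => (n / p.1) * p.2)
    (j := fun x => ⟨n / Nat.gcd x n, x / Nat.gcd x n⟩) ?_ ?_ ?_ ?_ ?_
  · rintro ⟨d, y⟩ hp
    simp only [Finset.mem_sigma, Nat.mem_divisors, mem_filter, mem_range] at hp ⊢
    obtain ⟨⟨hdn, -⟩, hy, hcop⟩ := hp
    have hd0 : 0 < d := by omega
    have hnd : 0 < n / d := Nat.div_pos (Nat.le_of_dvd hn hdn) hd0
    calc n / d * y < n / d * d := by exact (mul_lt_mul_iff_right₀ hnd).mpr hy
      _ = n := Nat.div_mul_cancel hdn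
  · intro x hx
    simp only [mem_range] at hx
    have hg : 0 < Nat.gcd x n := Nat.gcd_pos_of_pos_right _ hn
    simp only [Finset.mem_sigma, Nat.mem_divisors, mem_filter, mem_range]
    exact ⟨⟨Nat.div_dvd_of_dvd (Nat.gcd_dvd_right x n), hn.ne'⟩,
      Nat.div_lt_div_of_lt_of_dvd (Nat.gcd_dvd_right x n) hx,
      Nat.coprime_div_gcd_div_gcd hg⟩
  · rintro ⟨d, y⟩ hp
    simp only [Finset.mem_sigma, Nat.mem_divisors, mem_filter, mem_range] at hp
    obtain ⟨⟨hdn, -⟩, hy, hcop⟩ := hp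
    have hd0 : 0 < d := by omega
    have hnd : 0 < n / d := Nat.div_pos (Nat.le_of_dvd hn hdn) hd0
    have hgcd : Nat.gcd (n / d * y) n = n / d := by
      have h2 : Nat.gcd (n / d * y) (n / d * d) = n / d := by
        rw [Nat.gcd_mul_left, hcop.gcd_eq_one, mul_one]
      rwa [Nat.div_mul_cancel hdn] at h2
    have h1 : n / (n / d) = d := Nat.div_div_self hdn hn.ne'
    simp [hgcd, h1, Nat.mul_div_cancel_left y hnd]
  · intro x hx
    have hg : 0 < Nat.gcd x n := Nat.gcd_pos_of_pos_right _ (by simpa using hn)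
    have h1 : n / (n / Nat.gcd x n) = Nat.gcd x n :=
      Nat.div_div_self (Nat.gcd_dvd_right x n) hn.ne'
    simp only [h1]
    exact Nat.mul_div_cancel' (Nat.gcd_dvd_left x n)
  · rintro ⟨d, y⟩ hp
    simp only [Finset.mem_sigma, Nat.mem_divisors, mem_filter, mem_range] at hp
    obtain ⟨⟨hdn, -⟩, hy, hcop⟩ := hp
    have hd0 : d ≠ 0 := by omega
    have hnd : n / d ≠ 0 := (Nat.div_pos (Nat.le_of_dvd hn hdn) (by omega)).ne'
    have he : n / d * d = n := Nat.div_mul_cancel hdn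
    have hz := zet_pow_div (n / d) d hnd
    rw [he] at hz
    simp only [pow_mul, hz]

-- Möbius: ∑_{y<n coprime} ζ_n^y = μ n

lemma ram_mu (n : ℕ) (hn : 0 < n) :
    ∑ y ∈ (range n).filter (fun y => Nat.Coprime y n), zet n ^ y
      = (ArithmeticFunction.moebius n : ℂ) := by
  have key := (ArithmeticFunction.sum_eq_iff_sum_smul_moebius_eq
    (f := fun d => ∑ y ∈ (range d).filter (fun y => Nat.Coprime y d), zet d ^ y)
    (g := fun n => if n = 1 then 1 else 0)).mp
    (fun n hn => by rw [sum_div' n hn, full_sum n hn]) n hn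
  rw [← key]
  rw [Finset.sum_eq_single (n, 1)]
  · simp
  · rintro ⟨d, e⟩ hde hne
    have h := (Nat.mem_divisorsAntidiagonal.mp hde).1
    rcases eq_or_ne e 1 with rfl | he
    · exfalso; apply hne; simp at h; simp [h]
    · simp [he]
  · intro h
    exfalso; apply h
    rw [Nat.mem_divisorsAntidiagonal]
    simp [hn.ne']

lemma sum_reindex_unit (n : ℕ) (hn : 0 < n) (t : ℕ) (ht : Nat.Coprime t n)
    (f : ℕ → ℂ) (hf : ∀ k, f (k % n) = f k) :
    ∑ y ∈ (range n).filter (fun y => Nat.Coprime y n), f (t * y)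
      = ∑ y ∈ (range n).filter (fun y => Nat.Coprime y n), f y := by
  haveI : NeZero n := ⟨hn.ne'⟩
  have key : ∀ y, Nat.Coprime y n → (t * y) % n = (((t : ZMod n) * y).val) := by
    intro y _
    rw [ZMod.val_mul, ZMod.val_natCast, ZMod.val_natCast, Nat.mod_mul_mod, Nat.mul_mod_mod]
  calc ∑ y ∈ (range n).filter (fun y => Nat.Coprime y n), f (t * y)
      = ∑ y ∈ (range n).filter (fun y => Nat.Coprime y n), f (((t : ZMod n) * y).val) := by
        refine Finset.sum_congr rfl fun y hy => ?_
        simp only [mem_filter, mem_range] at hy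
        rw [← key y hy.2, hf]
    _ = ∑ y ∈ (range n).filter (fun y => Nat.Coprime y n), f y := by
        refine Finset.sum_nbij' (i := fun y => (((t : ZMod n) * y).val))
          (j := fun y => ((((t : ZMod n))⁻¹ * y).val)) ?_ ?_ ?_ ?_ ?_
        · intro y hy
          simp only [mem_filter, mem_range] at hy ⊢
          refine ⟨ZMod.val_lt _, ?_⟩
          have h1 : IsUnit ((t : ZMod n) * y) := by
            exact ((ZMod.isUnit_iff_coprime t n).mpr ht).mul
              ((ZMod.isUnit_iff_coprime y n).mpr hy.2)
          obtain ⟨u, hu⟩ := h1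
          rw [← hu]; exact ZMod.val_coe_unit_coprime u
        · intro y hy
          simp only [mem_filter, mem_range] at hy ⊢
          refine ⟨ZMod.val_lt _, ?_⟩
          have htu : IsUnit (t : ZMod n) := (ZMod.isUnit_iff_coprime t n).mpr ht
          have h1 : IsUnit (((t : ZMod n))⁻¹ * y) := by
            obtain ⟨u, hu⟩ := htu
            rw [← hu, ZMod.inv_coe_unit]
            exact (u⁻¹).isUnit.mul ((ZMod.isUnit_iff_coprime y n).mpr hy.2)
          obtain ⟨u, hu⟩ := h1
          rw [← hu]; exact ZMod.val_coe_unit_coprime u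
        · intro y hy
          simp only [mem_filter, mem_range] at hy
          have htu : IsUnit (t : ZMod n) := (ZMod.isUnit_iff_coprime t n).mpr ht
          show ((((t : ZMod n))⁻¹ * ((((t : ZMod n) * y).val : ℕ) : ZMod n)).val) = y
          rw [ZMod.natCast_val, ZMod.cast_id, ← mul_assoc,
            ZMod.inv_mul_of_unit _ htu, one_mul, ZMod.val_natCast,
            Nat.mod_eq_of_lt hy.1]
        · intro y hy
          simp only [mem_filter, mem_range] at hy
          have htu : IsUnit (t : ZMod n) := (ZMod.isUnit_iff_coprime t n).mpr ht
          show ((((t : ZMod n)) * (((((t : ZMod n))⁻¹ * y).val : ℕ) : ZMod n)).val) = y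
          rw [ZMod.natCast_val, ZMod.cast_id, ← mul_assoc,
            ZMod.mul_inv_of_unit _ htu, one_mul, ZMod.val_natCast,
            Nat.mod_eq_of_lt hy.1]
        · intro y hy; rfl

lemma fiber_card_le (n n₁ : ℕ) (hn : 0 < n) (hd : n₁ ∣ n) {y y' : ℕ}
    (hy1 : y < n₁) (hy2 : Nat.Coprime y n₁) (hy1' : y' < n₁) (hy2' : Nat.Coprime y' n₁) :
    (((range n).filter (fun x => Nat.Coprime x n)).filter (fun x => x % n₁ = y)).card ≤
    (((range n).filter (fun x => Nat.Coprime x n)).filter (fun x => x % n₁ = y')).card := by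
  haveI : NeZero n := ⟨hn.ne'⟩
  have hn₁ : 0 < n₁ := by
    rcases Nat.eq_zero_or_pos n₁ with h | h
    · omega
    · exact h
  haveI : NeZero n₁ := ⟨hn₁.ne'⟩
  set uy : (ZMod n₁)ˣ := ZMod.unitOfCoprime y hy2
  set uy' : (ZMod n₁)ˣ := ZMod.unitOfCoprime y' hy2'
  obtain ⟨U, hU⟩ := ZMod.unitsMap_surjective hd (uy⁻¹ * uy')
  refine Finset.card_le_card_of_injOn (f := fun x => ((x : ZMod n) * (U : ZMod n)).val) ?_ ?_
  · intro x hx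
    simp only [mem_filter, mem_range, mem_coe] at hx ⊢
    obtain ⟨⟨hx1, hx2⟩, hx3⟩ := hx
    have hunit : IsUnit ((x : ZMod n) * (U : ZMod n)) :=
      ((ZMod.isUnit_iff_coprime x n).mpr hx2).mul U.isUnit
    obtain ⟨u, hu⟩ := hunit
    refine ⟨⟨ZMod.val_lt _, by rw [← hu]; exact ZMod.val_coe_unit_coprime u⟩, ?_⟩
    -- compute mod n₁
    have hcast : ((((x : ZMod n) * (U : ZMod n)).val : ℕ) : ZMod n₁) = (y' : ZMod n₁) := by
      rw [ZMod.natCast_val, ZMod.cast_mul hd, ZMod.cast_natCast hd]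
      have hUc : (ZMod.cast (U : ZMod n) : ZMod n₁) = ((uy⁻¹ * uy' : (ZMod n₁)ˣ) : ZMod n₁) := by
        rw [← hU, ZMod.unitsMap_def]; rfl
      rw [hUc]
      have hxy : ((x : ℕ) : ZMod n₁) = (y : ZMod n₁) := by
        rw [← ZMod.natCast_mod x n₁, hx3]
      rw [hxy]
      have : (y : ZMod n₁) = (uy : ZMod n₁) := (ZMod.coe_unitOfCoprime y hy2).symm
      rw [this, ← Units.val_mul, ← mul_assoc, mul_inv_cancel, one_mul,
        ZMod.coe_unitOfCoprime]
    have := congrArg ZMod.val hcast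
    rwa [ZMod.val_natCast, ZMod.val_natCast, Nat.mod_eq_of_lt hy1'] at this
  · intro x hx x' hx' hxx
    simp only [mem_filter, mem_range, mem_coe] at hx hx'
    have hxx' : (((x : ZMod n) * U).val) = (((x' : ZMod n) * U).val) := hxx
    have h2 : ((((x : ZMod n) * U).val : ℕ) : ZMod n) = ((((x' : ZMod n) * U).val : ℕ) : ZMod n) := by
      rw [hxx']
    rw [ZMod.natCast_val, ZMod.cast_id, ZMod.natCast_val, ZMod.cast_id] at h2
    have h3 : (x : ZMod n) = (x' : ZMod n) := by
      have := congrArg (fun z => z * ((U⁻¹ : (ZMod n)ˣ) : ZMod n)) h2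
      simpa [mul_assoc, ← Units.val_mul] using this
    have := congrArg ZMod.val h3
    rwa [ZMod.val_natCast, ZMod.val_natCast, Nat.mod_eq_of_lt hx.1.1,
      Nat.mod_eq_of_lt hx'.1.1] at this

lemma moebius_norm_le (n : ℕ) : ‖((ArithmeticFunction.moebius n : ℤ) : ℂ)‖ ≤ 1 := by
  by_cases h : Squarefree n
  · rw [ArithmeticFunction.moebius_apply_of_squarefree h]
    push_cast
    rw [norm_pow, norm_neg, norm_one, one_pow]
  · rw [ArithmeticFunction.moebius_eq_zero_of_not_squarefree h]
    simp

lemma ram_bound (n : ℕ) (hn : 0 < n) (w : ZMod n) :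
    ‖∑ x ∈ (range n).filter (fun x => Nat.Coprime x n), eZM n (w * (x : ZMod n))‖
      ≤ (Nat.gcd n w.val : ℝ) := by
  haveI : NeZero n := ⟨hn.ne'⟩
  set g := Nat.gcd n w.val with hgdef
  have hg : 0 < g := Nat.gcd_pos_of_pos_left _ hn
  set n₁ := n / g with hn₁def
  set t := w.val / g with htdef
  have hgn : g ∣ n := Nat.gcd_dvd_left _ _
  have hgw : g ∣ w.val := Nat.gcd_dvd_right _ _
  have hsplit : n = g * n₁ := (Nat.mul_div_cancel' hgn).symm
  have hwsplit : w.val = g * t := (Nat.mul_div_cancel' hgw).symm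
  have hn₁ : 0 < n₁ := Nat.div_pos (Nat.le_of_dvd hn hgn) hg
  have hd : n₁ ∣ n := Nat.div_dvd_of_dvd hgn
  have hcop : Nat.Coprime t n₁ := (Nat.coprime_div_gcd_div_gcd hg).symm
  set ξ : ℂ := zet n₁ ^ t with hξdef
  have hξ1 : ξ ^ n₁ = 1 := by
    rw [hξdef, ← pow_mul, mul_comm, pow_mul, (zet_prim hn₁.ne').pow_eq_one, one_pow]
  have hξmod : ∀ k, ξ ^ (k % n₁) = ξ ^ k := by
    intro k
    conv_rhs => rw [← Nat.mod_add_div k n₁, pow_add, pow_mul, hξ1, one_pow, mul_one]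
  -- step 1: rewrite terms
  have hterm : ∀ x ∈ (range n).filter (fun x => Nat.Coprime x n),
      eZM n (w * (x : ZMod n)) = ξ ^ x := by
    intro x hx
    simp only [mem_filter, mem_range] at hx
    have hz : zet n ^ g = zet n₁ := by
      conv_lhs => rw [hsplit]
      exact zet_pow_div g n₁ hg.ne'
    rw [eZM_eq, ZMod.val_mul, ZMod.val_natCast, Nat.mod_eq_of_lt hx.1,
      zet_pow_mod n hn.ne', hwsplit, mul_assoc, pow_mul, hz, ← pow_mul]
  rw [Finset.sum_congr rfl hterm]
  set A := (range n).filter (fun x => Nat.Coprime x n) with hA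
  set B := (range n₁).filter (fun y => Nat.Coprime y n₁) with hB
  have hmaps : ∀ x ∈ A, x % n₁ ∈ B := by
    intro x hx
    simp only [hA, hB, mem_filter, mem_range] at hx ⊢
    refine ⟨Nat.mod_lt _ hn₁, ?_⟩
    have h1 : Nat.Coprime x n₁ := Nat.Coprime.coprime_dvd_right hd hx.2
    have : Nat.gcd n₁ x = 1 := Nat.coprime_comm.mp h1
    rwa [Nat.gcd_rec] at this
  have hfib : ∑ x ∈ A, ξ ^ x = ∑ y ∈ B, ∑ x ∈ A.filter (fun x => x % n₁ = y), ξ ^ x :=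
    (Finset.sum_fiberwise_of_maps_to hmaps _).symm
  have hy₀1 : 1 % n₁ < n₁ := Nat.mod_lt _ hn₁
  have hy₀2 : Nat.Coprime (1 % n₁) n₁ := by
    have : Nat.gcd n₁ 1 = 1 := Nat.gcd_one_right _
    rwa [Nat.gcd_rec] at this
  set c := (A.filter (fun x => x % n₁ = 1 % n₁)).card with hc
  have hcard : ∀ y ∈ B, (A.filter (fun x => x % n₁ = y)).card = c := by
    intro y hy
    simp only [hB, mem_filter, mem_range] at hy
    exact le_antisymm (fiber_card_le n n₁ hn hd hy.1 hy.2 hy₀1 hy₀2)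
      (fiber_card_le n n₁ hn hd hy₀1 hy₀2 hy.1 hy.2)
  have hinner : ∀ y ∈ B, ∑ x ∈ A.filter (fun x => x % n₁ = y), ξ ^ x = (c : ℂ) * ξ ^ y := by
    intro y hy
    have : ∀ x ∈ A.filter (fun x => x % n₁ = y), ξ ^ x = ξ ^ y := by
      intro x hx
      simp only [mem_filter] at hx
      rw [← hx.2, hξmod]
    rw [Finset.sum_congr rfl this, Finset.sum_const, hcard y hy, nsmul_eq_mul]
  rw [hfib, Finset.sum_congr rfl hinner, ← Finset.mul_sum]
  have hre : ∑ y ∈ B, ξ ^ y = ((ArithmeticFunction.moebius n₁ : ℤ) : ℂ) := by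
    have h1 : ∀ y, ξ ^ y = zet n₁ ^ (t * y) := fun y => by rw [pow_mul, hξdef]
    calc ∑ y ∈ B, ξ ^ y = ∑ y ∈ B, zet n₁ ^ (t * y) := Finset.sum_congr rfl (fun y _ => h1 y)
      _ = ∑ y ∈ B, zet n₁ ^ y :=
          sum_reindex_unit n₁ hn₁ t hcop (fun k => zet n₁ ^ k) (zet_pow_mod n₁ hn₁.ne')
      _ = _ := ram_mu n₁ hn₁
  rw [hre, norm_mul, Complex.norm_natCast]
  have hcle : (c : ℝ) ≤ (g : ℝ) := by
    have : c ≤ g := by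
      rw [hc]
      refine Finset.card_le_card_of_injOn (f := fun x => x / n₁) ?_ ?_ |>.trans
        (by rw [Finset.card_range])
      · intro x hx
        simp only [hA, mem_filter, mem_range, mem_coe] at hx
        simp only [mem_range, mem_coe]
        rw [Nat.div_lt_iff_lt_mul hn₁]
        omega
      · intro x hx x' hx' hxx
        simp only [hA, mem_coe, mem_filter, mem_range] at hx hx'
        have hxx' : x / n₁ = x' / n₁ := hxx
        calc x = n₁ * (x / n₁) + x % n₁ := (Nat.div_add_mod x n₁).symm
          _ = n₁ * (x' / n₁) + x' % n₁ := by rw [hxx', hx.2, hx'.2]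
          _ = x' := Nat.div_add_mod x' n₁
    exact_mod_cast this
  calc (c : ℝ) * ‖((ArithmeticFunction.moebius n₁ : ℤ) : ℂ)‖ ≤ (c : ℝ) * 1 := by
        refine mul_le_mul_of_nonneg_left (moebius_norm_le n₁) (Nat.cast_nonneg _)
    _ = (c : ℝ) := mul_one _
    _ ≤ (g : ℝ) := hcle

lemma eZM_zero (n : ℕ) (hn : n ≠ 0) : eZM n 0 = 1 := by
  haveI : NeZero n := ⟨hn⟩
  rw [eZM_eq, ZMod.val_zero, pow_zero]

lemma eZM_add (n : ℕ) (hn : n ≠ 0) (x y : ZMod n) :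
    eZM n (x + y) = eZM n x * eZM n y := by
  haveI : NeZero n := ⟨hn⟩
  rw [eZM_eq, eZM_eq, eZM_eq, ZMod.val_add, zet_pow_mod n hn, pow_add]

lemma eZM_nat_mul (n : ℕ) (hn : n ≠ 0) (b : ℕ) (x : ZMod n) :
    eZM n ((b : ZMod n) * x) = (eZM n x) ^ b := by
  haveI : NeZero n := ⟨hn⟩
  rw [eZM_eq, eZM_eq, ZMod.val_mul, ZMod.val_natCast, Nat.mod_mul_mod,
    zet_pow_mod n hn, mul_comm b, pow_mul]

lemma eZM_pow_self (n : ℕ) (hn : n ≠ 0) (x : ZMod n) : (eZM n x) ^ n = 1 := by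
  rw [eZM_eq, ← pow_mul, mul_comm, pow_mul, (zet_prim hn).pow_eq_one, one_pow]

lemma z_one_iff (m n : ℕ) (hm : m ≠ 0) (hn : n ≠ 0) (w₁ : ZMod m) (w₂ : ZMod n) :
    eZM m w₁ * eZM n w₂ = 1 ↔ (m * n) ∣ (w₁.val * n + w₂.val * m) := by
  have hzn : zet (m * n) ^ n = zet m := by
    have := zet_pow_div n m hn
    rwa [mul_comm n m] at this
  have hzm : zet (m * n) ^ m = zet n := zet_pow_div m n hm
  have h1 : eZM m w₁ = zet (m * n) ^ (w₁.val * n) := by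
    rw [eZM_eq, mul_comm w₁.val n, pow_mul, hzn]
  have h2 : eZM n w₂ = zet (m * n) ^ (w₂.val * m) := by
    rw [eZM_eq, mul_comm w₂.val m, pow_mul, hzm]
  rw [h1, h2, ← pow_add]
  exact (zet_prim (by positivity)).pow_eq_one_iff_dvd _

lemma c1star_eval (qh qh' ph : ℕ) (hqh : qh ≠ 0) (hqh' : qh' ≠ 0) (a a' : ℤ) :
    c1star qh qh' ph a a' 0 =
      ∑ x ∈ (range qh).filter (fun x => Nat.Coprime x qh),
        ∑ y ∈ (range qh').filter (fun y => Nat.Coprime y qh'),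
          (if (qh * qh') ∣
              ((((x : ZMod qh))⁻¹ * ((ph : ZMod qh))⁻¹).val * qh' +
               (((y : ZMod qh'))⁻¹ * ((ph : ZMod qh'))⁻¹).val * qh)
            then ((qh * qh' : ℕ) : ℂ) else 0) *
          (eZM qh ((a : ZMod qh) * ((ph : ZMod qh))⁻¹ * x) *
           eZM qh' ((a' : ZMod qh') * ((ph : ZMod qh'))⁻¹ * y)) := by
  have hN : qh * qh' ≠ 0 := by positivity
  unfold c1star kloos
  calc ∑ b ∈ range (qh * qh'), _ = ∑ b ∈ range (qh * qh'),
      ∑ x ∈ (range qh).filter (fun x => Nat.Coprime x qh),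
        ∑ y ∈ (range qh').filter (fun y => Nat.Coprime y qh'),
          (eZM qh ((a : ZMod qh) * ((ph : ZMod qh))⁻¹ * x) *
           eZM qh' ((a' : ZMod qh') * ((ph : ZMod qh'))⁻¹ * y)) *
          ((eZM qh (((x : ZMod qh))⁻¹ * ((ph : ZMod qh))⁻¹) *
            eZM qh' (((y : ZMod qh'))⁻¹ * ((ph : ZMod qh'))⁻¹)) ^ b) := by
        refine Finset.sum_congr rfl fun b _ => ?_
        rw [Int.cast_zero, zero_mul, zero_mul, eZM_zero _ hN, mul_one, Finset.sum_mul_sum]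
        refine Finset.sum_congr rfl fun x hx => Finset.sum_congr rfl fun y hy => ?_
        rw [eZM_add _ hqh, eZM_add _ hqh']
        have e1 : ((b : ZMod qh) * ((ph : ZMod qh))⁻¹ * ((x : ZMod qh))⁻¹)
            = (b : ZMod qh) * (((x : ZMod qh))⁻¹ * ((ph : ZMod qh))⁻¹) := by ring
        have e2 : ((b : ZMod qh') * ((ph : ZMod qh'))⁻¹ * ((y : ZMod qh'))⁻¹)
            = (b : ZMod qh') * (((y : ZMod qh'))⁻¹ * ((ph : ZMod qh'))⁻¹) := by ring
        rw [e1, e2, eZM_nat_mul _ hqh, eZM_nat_mul _ hqh', mul_pow]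
        ring
    _ = _ := by
        rw [Finset.sum_comm]
        refine Finset.sum_congr rfl fun x hx => ?_
        rw [Finset.sum_comm]
        refine Finset.sum_congr rfl fun y hy => ?_
        rw [← Finset.mul_sum, geom_root _ _ (by
          rw [mul_pow, pow_mul, eZM_pow_self _ hqh, one_pow, mul_comm qh qh',
            pow_mul, eZM_pow_self _ hqh', one_pow, one_mul])]
        simp only [z_one_iff _ _ hqh hqh']
        rw [mul_comm]

lemma isUnit_inv {n : ℕ} {z : ZMod n} (h : IsUnit z) : IsUnit z⁻¹ := by
  obtain ⟨u, rfl⟩ := h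
  rw [ZMod.inv_coe_unit]
  exact (u⁻¹).isUnit

lemma coprime_val {n : ℕ} {z : ZMod n} (h : IsUnit z) : Nat.Coprime z.val n := by
  obtain ⟨u, rfl⟩ := h
  exact ZMod.val_coe_unit_coprime u

lemma c1star_vanish (qh qh' ph : ℕ) (hqh : qh ≠ 0) (hqh' : qh' ≠ 0) (hne : qh ≠ qh')
    (hp : Nat.Coprime ph qh) (hp' : Nat.Coprime ph qh') (a a' : ℤ) :
    c1star qh qh' ph a a' 0 = 0 := by
  rw [c1star_eval qh qh' ph hqh hqh' a a']
  refine Finset.sum_eq_zero fun x hx => Finset.sum_eq_zero fun y hy => ?_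
  simp only [mem_filter, mem_range] at hx hy
  rw [if_neg, zero_mul]
  intro hdvd
  have hw₁ : IsUnit (((x : ZMod qh))⁻¹ * ((ph : ZMod qh))⁻¹) :=
    (isUnit_inv ((ZMod.isUnit_iff_coprime x qh).mpr hx.2)).mul
      (isUnit_inv ((ZMod.isUnit_iff_coprime ph qh).mpr hp))
  have hw₂ : IsUnit (((y : ZMod qh'))⁻¹ * ((ph : ZMod qh'))⁻¹) :=
    (isUnit_inv ((ZMod.isUnit_iff_coprime y qh').mpr hy.2)).mul
      (isUnit_inv ((ZMod.isUnit_iff_coprime ph qh').mpr hp'))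
  set v₁ := (((x : ZMod qh))⁻¹ * ((ph : ZMod qh))⁻¹).val
  set v₂ := (((y : ZMod qh'))⁻¹ * ((ph : ZMod qh'))⁻¹).val
  have h1 : qh ∣ v₁ * qh' := by
    have hd1 : qh ∣ v₁ * qh' + v₂ * qh := dvd_trans (Dvd.intro qh' rfl) hdvd
    have h := Nat.dvd_sub hd1 (Dvd.intro v₂ rfl)
    have he : v₁ * qh' + v₂ * qh - qh * v₂ = v₁ * qh' := by
      rw [mul_comm qh v₂]; omega
    rwa [he] at h
  have h2 : qh' ∣ v₂ * qh := by
    have hd2 : qh' ∣ v₁ * qh' + v₂ * qh := dvd_trans (Dvd.intro_left qh rfl) hdvd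
    have h := Nat.dvd_sub hd2 (Dvd.intro_left v₁ rfl)
    have he : v₁ * qh' + v₂ * qh - v₁ * qh' = v₂ * qh := by omega
    rwa [he] at h
  have hc1 : Nat.Coprime qh v₁ := (coprime_val hw₁).symm
  have hc2 : Nat.Coprime qh' v₂ := (coprime_val hw₂).symm
  have d1 : qh ∣ qh' := hc1.dvd_of_dvd_mul_left h1
  have d2 : qh' ∣ qh := hc2.dvd_of_dvd_mul_left h2
  exact hne (Nat.dvd_antisymm d1 d2)

lemma zmod_inv_inv {n : ℕ} {z w : ZMod n} (h : z * w = 1) : z⁻¹ = w :=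
  ZMod.inv_eq_of_mul_eq_one n z w h

lemma c1star_bound (qh ph : ℕ) (hqh : qh ≠ 0) (hp : Nat.Coprime ph qh) (a a' : ℤ) :
    ‖c1star qh qh ph a a' 0‖ ≤
      (qh : ℝ) ^ 2 * (Nat.gcd qh ((((a - a' : ℤ) : ZMod qh) * ((ph : ZMod qh))⁻¹).val) : ℝ) := by
  haveI : NeZero qh := ⟨hqh⟩
  have hqhpos : 0 < qh := Nat.pos_of_ne_zero hqh
  set P : ZMod qh := ((ph : ZMod qh))⁻¹ with hP
  have hphu : IsUnit (ph : ZMod qh) := (ZMod.isUnit_iff_coprime ph qh).mpr hp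
  have hPmul : P * (ph : ZMod qh) = 1 := ZMod.inv_mul_of_unit _ hphu
  set W : ZMod qh := ((a - a' : ℤ) : ZMod qh) * P with hW
  have key : c1star qh qh ph a a' 0 =
      ((qh * qh : ℕ) : ℂ) *
        ∑ x ∈ (range qh).filter (fun x => Nat.Coprime x qh), eZM qh (W * (x : ZMod qh)) := by
    rw [c1star_eval qh qh ph hqh hqh a a', Finset.mul_sum]
    refine Finset.sum_congr rfl fun x hx => ?_
    simp only [mem_filter, mem_range] at hx
    have hxu : IsUnit (x : ZMod qh) := (ZMod.isUnit_iff_coprime x qh).mpr hx.2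
    have hXu : IsUnit (-(x : ZMod qh)) := by
      have : (-(x : ZMod qh)) = (-1) * (x : ZMod qh) := by ring
      rw [this]; exact (IsUnit.neg isUnit_one).mul hxu
    set y₀ : ℕ := (-(x : ZMod qh)).val with hy₀
    have hy₀cast : ((y₀ : ℕ) : ZMod qh) = -(x : ZMod qh) := by
      rw [hy₀, ZMod.natCast_val, ZMod.cast_id]
    -- characterize the condition
    have hcond : ∀ y : ℕ, y < qh → Nat.Coprime y qh →
        ((qh * qh ∣ (((x : ZMod qh))⁻¹ * P).val * qh + (((y : ZMod qh))⁻¹ * P).val * qh)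
          ↔ y = y₀) := by
      intro y hylt hyc
      have hyu : IsUnit (y : ZMod qh) := (ZMod.isUnit_iff_coprime y qh).mpr hyc
      constructor
      · intro hdvd
        have h1 : qh ∣ (((x : ZMod qh))⁻¹ * P).val + (((y : ZMod qh))⁻¹ * P).val := by
          have : qh * qh ∣ ((((x : ZMod qh))⁻¹ * P).val + (((y : ZMod qh))⁻¹ * P).val) * qh := by
            rwa [add_mul]
          exact (Nat.mul_dvd_mul_iff_right hqhpos).mp (by rwa [mul_comm qh qh] at this)
        have h2 : ((x : ZMod qh))⁻¹ * P + ((y : ZMod qh))⁻¹ * P = 0 := by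
          have hcast : ((((((x : ZMod qh))⁻¹ * P).val + (((y : ZMod qh))⁻¹ * P).val) : ℕ) : ZMod qh)
              = ((x : ZMod qh))⁻¹ * P + ((y : ZMod qh))⁻¹ * P := by
            push_cast [ZMod.natCast_val, ZMod.cast_id]
            rfl
          rw [← hcast]
          exact (ZMod.natCast_eq_zero_iff _ _).mpr h1
        -- deduce y = y₀
        have h3 : ((x : ZMod qh))⁻¹ + ((y : ZMod qh))⁻¹ = 0 := by
          have := congrArg (fun z => z * (ph : ZMod qh)) h2
          simpa [add_mul, mul_assoc, hPmul] using this
        have h4 : ((y : ZMod qh))⁻¹ = -((x : ZMod qh))⁻¹ := by linear_combination h3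
        have h5 : (y : ZMod qh) = -(x : ZMod qh) := by
          have hyy : (((y : ZMod qh))⁻¹)⁻¹ = (y : ZMod qh) :=
            zmod_inv_inv (ZMod.inv_mul_of_unit _ hyu)
          rw [← hyy, h4]
          exact zmod_inv_inv (by
            have : -((x : ZMod qh))⁻¹ * -(x : ZMod qh) = ((x : ZMod qh))⁻¹ * (x : ZMod qh) := by
              ring
            rw [this]
            exact ZMod.inv_mul_of_unit _ hxu)
        have := congrArg ZMod.val h5
        rwa [ZMod.val_natCast, Nat.mod_eq_of_lt hylt] at this
      · rintro rfl
        have h5 : ((y₀ : ZMod qh))⁻¹ = -((x : ZMod qh))⁻¹ := by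
          rw [hy₀cast]
          exact zmod_inv_inv (by
            have : -(x : ZMod qh) * -((x : ZMod qh))⁻¹ = (x : ZMod qh) * ((x : ZMod qh))⁻¹ := by
              ring
            rw [this]
            exact ZMod.mul_inv_of_unit _ hxu)
        have : (((x : ZMod qh))⁻¹ * P).val + (((y₀ : ZMod qh))⁻¹ * P).val
            ≡ 0 [MOD qh] := by
          have hz : ((x : ZMod qh))⁻¹ * P + ((y₀ : ZMod qh))⁻¹ * P = 0 := by
            rw [h5]; ring
          have hcast : ((((((x : ZMod qh))⁻¹ * P).val + (((y₀ : ZMod qh))⁻¹ * P).val) : ℕ) : ZMod qh)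
              = ((x : ZMod qh))⁻¹ * P + ((y₀ : ZMod qh))⁻¹ * P := by
            push_cast [ZMod.natCast_val, ZMod.cast_id]
            rfl
          have := (ZMod.natCast_eq_zero_iff
            ((((x : ZMod qh))⁻¹ * P).val + (((y₀ : ZMod qh))⁻¹ * P).val) qh).mp
            (by rw [hcast, hz])
          exact (Nat.modEq_zero_iff_dvd).mpr this
        have hdvd : qh ∣ (((x : ZMod qh))⁻¹ * P).val + (((y₀ : ZMod qh))⁻¹ * P).val :=
          (Nat.modEq_zero_iff_dvd).mp this
        rw [mul_comm qh qh, ← add_mul]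
        exact Nat.mul_dvd_mul hdvd dvd_rfl
    -- collapse inner sum to y = y₀
    have hy₀mem : y₀ ∈ (range qh).filter (fun y => Nat.Coprime y qh) := by
      simp only [mem_filter, mem_range]
      exact ⟨ZMod.val_lt _, coprime_val hXu⟩
    rw [Finset.sum_eq_single_of_mem y₀ hy₀mem]
    · rw [if_pos, hy₀cast]
      · have hcomb : eZM qh ((a : ZMod qh) * P * (x : ZMod qh)) *
            eZM qh ((a' : ZMod qh) * P * (-(x : ZMod qh))) = eZM qh (W * (x : ZMod qh)) := by
          rw [← eZM_add qh hqh]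
          congr 1
          rw [hW]
          push_cast
          ring
        rw [hcomb]
      · exact (hcond y₀ (ZMod.val_lt _) (coprime_val hXu)).mpr rfl
    · intro y hy hyne
      simp only [mem_filter, mem_range] at hy
      rw [if_neg, zero_mul]
      intro hdvd
      exact hyne ((hcond y hy.1 hy.2).mp hdvd)
  rw [key, norm_mul, Complex.norm_natCast]
  have := ram_bound qh hqhpos W
  calc ((qh * qh : ℕ) : ℝ) * ‖∑ x ∈ (range qh).filter (fun x => Nat.Coprime x qh),
        eZM qh (W * (x : ZMod qh))‖
      ≤ ((qh * qh : ℕ) : ℝ) * (Nat.gcd qh W.val : ℝ) := by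
        exact mul_le_mul_of_nonneg_left this (by positivity)
    _ = (qh : ℝ) ^ 2 * (Nat.gcd qh W.val : ℝ) := by push_cast; ring

lemma gcd_bridge (qh ph t : ℕ) (hqh : qh ≠ 0) (hp : Nat.Coprime ph qh)
    (a a' m m' : ℤ)
    (hm : ((m - m' : ℤ) : ZMod qh) = ((a - a' : ℤ) : ZMod qh) * ((t : ℕ) : ZMod qh)) :
    (Nat.gcd qh ((((a - a' : ℤ) : ZMod qh) * ((ph : ZMod qh))⁻¹).val) : ℝ)
      ≤ (Int.gcd (qh : ℤ) (m - m') : ℝ) := by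
  haveI : NeZero qh := ⟨hqh⟩
  set P : ZMod qh := ((ph : ZMod qh))⁻¹ with hP
  have hphu : IsUnit (ph : ZMod qh) := (ZMod.isUnit_iff_coprime ph qh).mpr hp
  have hPmul : P * (ph : ZMod qh) = 1 := ZMod.inv_mul_of_unit _ hphu
  set W : ZMod qh := ((a - a' : ℤ) : ZMod qh) * P with hW
  set d : ℕ := Nat.gcd qh W.val with hd
  have hdq : d ∣ qh := Nat.gcd_dvd_left _ _
  have hdW : d ∣ W.val := Nat.gcd_dvd_right _ _
  -- (m - m') mod qh equals W * (ph * t)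
  have hmm : ((m - m' : ℤ) : ZMod qh) = W * ((ph : ZMod qh) * (t : ZMod qh)) := by
    rw [hm, hW]
    have : ((a - a' : ℤ) : ZMod qh) * P * ((ph : ZMod qh) * (t : ZMod qh))
        = ((a - a' : ℤ) : ZMod qh) * (P * (ph : ZMod qh)) * (t : ZMod qh) := by ring
    rw [this, hPmul, mul_one]
  set v : ℕ := ((m - m' : ℤ) : ZMod qh).val with hv
  have hdv : d ∣ v := by
    have : v = (W.val * ((ph : ZMod qh) * (t : ZMod qh)).val) % qh := by
      rw [hv, hmm, ZMod.val_mul]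
    rw [this]
    rw [Nat.dvd_mod_iff hdq]
    exact Dvd.dvd.mul_right hdW _
  have hqdiff : (qh : ℤ) ∣ (m - m') - (v : ℤ) := by
    rw [← ZMod.intCast_zmod_eq_zero_iff_dvd]
    push_cast
    rw [ZMod.natCast_val, ZMod.cast_id]
    push_cast
    ring
  have hdmm : (d : ℤ) ∣ (m - m') := by
    have h1 : (d : ℤ) ∣ (m - m') - (v : ℤ) := dvd_trans (Int.natCast_dvd_natCast.mpr hdq) hqdiff
    have h2 : (d : ℤ) ∣ (v : ℤ) := Int.natCast_dvd_natCast.mpr hdv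
    have := dvd_add h1 h2
    simpa using this
  have hfin : d ∣ Int.gcd (qh : ℤ) (m - m') := by
    refine Nat.dvd_gcd ?_ ?_
    · simpa using hdq
    · exact Int.natAbs_dvd_natAbs.mpr (by simpa using hdmm)
  have hpos : 0 < Int.gcd (qh : ℤ) (m - m') := by
    rcases Nat.eq_zero_or_pos (Int.gcd (qh : ℤ) (m - m')) with h | h
    · exfalso
      have := Int.gcd_eq_zero_iff.mp h
      exact hqh (by exact_mod_cast this.1)
    · exact h
  exact_mod_cast Nat.le_of_dvd hpos hfin

end Aux

theorem stmt_7 :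
    ∃ C : ℝ, 0 < C ∧
      ∀ (p : ℕ), p.Prime → ∀ (k : ℕ), 3 ≤ k →
      ∀ (χ : DirichletCharacter ℂ (p ^ k)), χ.IsPrimitive →
      ∀ (lam : ℕ), 1 ≤ lam → lam ≤ k →
      ∀ (η : ℤ), (η = 1 ∨ η = -1) →
      ∀ (n₁' n₁'' : ℕ), 0 < n₁' → Nat.Coprime n₁' p → n₁'' ∣ p ^ lam →
      ∀ (q q' : ℕ), 0 < q → 0 < q' → Nat.Coprime q p → Nat.Coprime q' p →
        n₁' ∣ q → n₁' ∣ q' →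
      ∀ (m m' a a' : ℤ), Int.gcd a q = 1 → Int.gcd a' q' = 1 →
        m ≡ a * (p : ℤ) ^ (k - lam) [ZMOD (q : ℤ)] →
        m' ≡ a' * (p : ℤ) ^ (k - lam) [ZMOD (q' : ℤ)] →
        (q ≠ q' → c1star (q / n₁') (q' / n₁') (p ^ lam / n₁'') a a' 0 = 0) ∧
        (q = q' →
          ‖c1star (q / n₁') (q' / n₁') (p ^ lam / n₁'') a a' 0‖ ≤
            C * ((q / n₁' : ℕ) : ℝ) ^ 2 * (Int.gcd (q / n₁' : ℕ) (m - m') : ℝ)) := by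
  refine ⟨1, one_pos, ?_⟩
  intro p hp k hk χ hχ lam hlam1 hlam2 η hη n₁' n₁'' hn₁' hn₁'p hn₁'' q q' hq hq'
    hqp hq'p hdvd hdvd' m m' a a' ha ha' hm hm'
  have hqhmul : q / n₁' * n₁' = q := Nat.div_mul_cancel hdvd
  have hqh'mul : q' / n₁' * n₁' = q' := Nat.div_mul_cancel hdvd'
  have hqh0 : q / n₁' ≠ 0 := by
    intro h; rw [h, zero_mul] at hqhmul; omega
  have hqh'0 : q' / n₁' ≠ 0 := by
    intro h; rw [h, zero_mul] at hqh'mul; omega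
  have hqhq : q / n₁' ∣ q := Nat.div_dvd_of_dvd hdvd
  have hqh'q : q' / n₁' ∣ q' := Nat.div_dvd_of_dvd hdvd'
  have hqhp : Nat.Coprime p (q / n₁') :=
    Nat.coprime_comm.mp (Nat.Coprime.coprime_dvd_left hqhq hqp)
  have hqh'p : Nat.Coprime p (q' / n₁') :=
    Nat.coprime_comm.mp (Nat.Coprime.coprime_dvd_left hqh'q hq'p)
  have hph_dvd : p ^ lam / n₁'' ∣ p ^ lam := Nat.div_dvd_of_dvd hn₁''
  have hphqh : Nat.Coprime (p ^ lam / n₁'') (q / n₁') :=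
    Nat.Coprime.coprime_dvd_left hph_dvd (Nat.Coprime.pow_left lam hqhp)
  have hphqh' : Nat.Coprime (p ^ lam / n₁'') (q' / n₁') :=
    Nat.Coprime.coprime_dvd_left hph_dvd (Nat.Coprime.pow_left lam hqh'p)
  constructor
  · intro hne
    have hqhne : q / n₁' ≠ q' / n₁' := by
      intro h
      exact hne (by rw [← hqhmul, ← hqh'mul, h])
    exact c1star_vanish _ _ _ hqh0 hqh'0 hqhne hphqh hphqh' a a'
  · intro heq
    subst heq
    have hmod : ((m - m' : ℤ) : ZMod (q / n₁'))
        = ((a - a' : ℤ) : ZMod (q / n₁')) * ((p ^ (k - lam) : ℕ) : ZMod (q / n₁')) := by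
      have h1 : m ≡ a * (p : ℤ) ^ (k - lam) [ZMOD ((q / n₁' : ℕ) : ℤ)] :=
        hm.of_dvd (Int.natCast_dvd_natCast.mpr hqhq)
      have h2 : m' ≡ a' * (p : ℤ) ^ (k - lam) [ZMOD ((q / n₁' : ℕ) : ℤ)] :=
        hm'.of_dvd (Int.natCast_dvd_natCast.mpr hqhq)
      have h3 : m - m' ≡ (a - a') * (p : ℤ) ^ (k - lam) [ZMOD ((q / n₁' : ℕ) : ℤ)] := by
        have h4 := h1.sub h2
        have h5 : a * (p : ℤ) ^ (k - lam) - a' * (p : ℤ) ^ (k - lam)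
            = (a - a') * (p : ℤ) ^ (k - lam) := by ring
        rwa [h5] at h4
      have h6 := (ZMod.intCast_eq_intCast_iff _ _ _).mpr h3
      rw [h6]
      push_cast
      ring
    calc ‖c1star (q / n₁') (q / n₁') (p ^ lam / n₁'') a a' 0‖
        ≤ ((q / n₁' : ℕ) : ℝ) ^ 2 *
            (Nat.gcd (q / n₁') ((((a - a' : ℤ) : ZMod (q / n₁')) *
              (((p ^ lam / n₁'' : ℕ) : ZMod (q / n₁')))⁻¹).val) : ℝ) :=
          c1star_bound _ _ hqh0 hphqh a a'
      _ ≤ ((q / n₁' : ℕ) : ℝ) ^ 2 * (Int.gcd ((q / n₁' : ℕ) : ℤ) (m - m') : ℝ) := by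
          refine mul_le_mul_of_nonneg_left ?_ (by positivity)
          exact gcd_bridge _ _ (p ^ (k - lam)) hqh0 hphqh a a' m m' hmod
      _ = 1 * ((q / n₁' : ℕ) : ℝ) ^ 2 * (Int.gcd ((q / n₁' : ℕ) : ℤ) (m - m') : ℝ) := by
          ring
end
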